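/- arXiv:2301.07075 — 8 statements merged into one kernel-verified Lean document; each statement's English description precedes it below -/
import Mathlib

section
/- Let (X,d,μ) be a metric measure space with μ(X) = ∞ and 0 < μ(U) < ∞ for every nonempty bounded open U, let w be a radius-weight, and let f be locally integrable. Then for every x ∈ X, lim_{p→∞} I_{p,w}f(x) = Mf(x), where I_{p,w}f(x) = (∫_0^∞ w(r) (Af(x,r))^p dr)^{1/p}, Af(x,r) = (1/μ(B(x,r))) ∫_{B(x,r)} |f| dμ, and Mf(x) = sup_{r>0} Af(x,r). -/
open MeasureTheory Metric Filter Set ENNReal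

/-- The averaging function `Af(x,r)`: the mean of `|f|` over the open ball `B(x,r)`. -/
noncomputable def ballAvg {X : Type*} [MetricSpace X] [MeasurableSpace X]
    (mu : Measure X) (f : X → ℝ) (x : X) (r : ℝ) : ℝ≥0∞ :=
  (∫⁻ y in Metric.ball x r, (‖f y‖₊ : ℝ≥0∞) ∂mu) / mu (Metric.ball x r)

/-- The centered Hardy–Littlewood maximal function `Mf(x) = sup_{r>0} Af(x,r)`. -/
noncomputable def maximalFn {X : Type*} [MetricSpace X] [MeasurableSpace X]
    (mu : Measure X) (f : X → ℝ) (x : X) : ℝ≥0∞ :=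
  ⨆ (r : ℝ) (_ : 0 < r), ballAvg mu f x r

/-- `‖w‖ = ∫_0^∞ w(r) dr`. -/
noncomputable def wNorm (w : ℝ → ℝ) : ℝ≥0∞ :=
  ∫⁻ r in Set.Ioi (0 : ℝ), ENNReal.ofReal (w r)

/-- The Hardy–Littlewood integral-function
`I_{p,w}f(x) = (∫_0^∞ w(r) (Af(x,r))^p dr)^{1/p}` for `1 ≤ p < ∞`. -/
noncomputable def intFn {X : Type*} [MetricSpace X] [MeasurableSpace X]
    (mu : Measure X) (w : ℝ → ℝ) (p : ℝ) (f : X → ℝ) (x : X) : ℝ≥0∞ :=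
  (∫⁻ r in Set.Ioi (0 : ℝ), ENNReal.ofReal (w r) * (ballAvg mu f x r) ^ p) ^ (1 / p)

/-- The `L^q`-norm (with respect to `mu`) of an `ℝ≥0∞`-valued function, `1 ≤ q ≤ ∞`. -/
noncomputable def lqNorm {X : Type*} [MeasurableSpace X] (mu : Measure X)
    (g : X → ℝ≥0∞) (q : ℝ≥0∞) : ℝ≥0∞ :=
  if q = ∞ then essSup g mu else (∫⁻ x, g x ^ q.toReal ∂mu) ^ (1 / q.toReal)

/-- `I_{p,w}` for an extended exponent `1 ≤ p ≤ ∞`, with `I_{∞,w}f = Mf`. -/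
noncomputable def intFnE {X : Type*} [MetricSpace X] [MeasurableSpace X]
    (mu : Measure X) (w : ℝ → ℝ) (p : ℝ≥0∞) (f : X → ℝ) (x : X) : ℝ≥0∞ :=
  if p = ∞ then maximalFn mu f x else intFn mu w p.toReal f x

lemma aux_rpow_one_div_tendsto {a : ℝ≥0∞} (h0 : a ≠ 0) (ht : a ≠ ∞) :
    Filter.Tendsto (fun p : ℝ => a ^ (1 / p)) Filter.atTop (nhds 1) := by
  have hb : (0 : ℝ) < a.toReal := ENNReal.toReal_pos h0 ht
  have h1 : Filter.Tendsto (fun p : ℝ => 1 / p) Filter.atTop (nhds 0) := by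
    simpa only [one_div] using tendsto_inv_atTop_zero
  have h2 : Filter.Tendsto (fun p : ℝ => a.toReal ^ (1 / p)) Filter.atTop
      (nhds 1) := by
    have := (Real.continuousAt_const_rpow (a := a.toReal) (b := (0:ℝ)) hb.ne').tendsto.comp h1
    simpa [Real.rpow_zero, Function.comp_def] using this
  have h3 : Filter.Tendsto (fun p : ℝ => ENNReal.ofReal (a.toReal ^ (1 / p)))
      Filter.atTop (nhds 1) := by
    have := (ENNReal.continuous_ofReal.tendsto 1).comp h2
    simpa [Function.comp_def] using this
  refine h3.congr fun p => ?_
  rw [← ENNReal.ofReal_rpow_of_pos hb, ENNReal.ofReal_toReal ht]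

theorem intFn_tendsto_maximalFn {X : Type*} [MetricSpace X] [MeasurableSpace X] [BorelSpace X]
    (mu : Measure X)
    (hXunbdd : ¬ Bornology.IsBounded (Set.univ : Set X))
    (hXinf : mu Set.univ = ∞)
    (hU : ∀ U : Set X, IsOpen U → U.Nonempty → Bornology.IsBounded U →
      0 < mu U ∧ mu U < ∞)
    (w : ℝ → ℝ) (hw_meas : Measurable w) (hw_nonneg : ∀ r, 0 ≤ w r)
    (hw_fin : wNorm w < ∞)
    (hw_ne : ∀ᵐ r ∂(volume.restrict (Set.Ioi (0 : ℝ))), w r ≠ 0)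
    (f : X → ℝ) (hf_meas : Measurable f)
    (hf_loc : ∀ s : Set X, Bornology.IsBounded s →
      (∫⁻ y in s, (‖f y‖₊ : ℝ≥0∞) ∂mu) < ∞)
    (x : X) :
    Filter.Tendsto (fun p : ℝ => intFn mu w p f x) Filter.atTop
      (nhds (maximalFn mu f x)) := by
  set g : ℝ → ℝ≥0∞ := fun r => ballAvg mu f x r with hg
  set M : ℝ≥0∞ := maximalFn mu f x with hM
  set W : ℝ≥0∞ := wNorm w with hWdef
  have hwE : Measurable fun r : ℝ => ENNReal.ofReal (w r) := hw_meas.ennreal_ofReal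
  -- null set where w vanishes
  have hnull : volume ({r : ℝ | w r = 0} ∩ Set.Ioi (0:ℝ)) = 0 := by
    have hms : MeasurableSet {r : ℝ | w r = 0} := hw_meas (measurableSet_singleton 0)
    have := (ae_restrict_iff' (μ := volume) (p := fun r => w r ≠ 0)
      measurableSet_Ioi).1 hw_ne
    rw [ae_iff] at this
    refine measure_mono_null ?_ this
    intro r hr
    simp only [Set.mem_setOf_eq, Set.mem_inter_iff] at hr ⊢
    tauto
  -- W ≠ 0
  have hW0 : W ≠ 0 := by
    have : 0 < W := by
      rw [hWdef, wNorm, lintegral_pos_iff_support hwE]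
      have hsub : Set.Ioi (0:ℝ) \ Function.support (fun r => ENNReal.ofReal (w r))
          ⊆ {r : ℝ | w r = 0} ∩ Set.Ioi (0:ℝ) := by
        intro r hr
        rcases hr with ⟨hr1, hr2⟩
        simp only [Function.mem_support, ne_eq, not_not, ENNReal.ofReal_eq_zero] at hr2
        exact ⟨le_antisymm hr2 (hw_nonneg r), hr1⟩
      have h2 : volume (Set.Ioi (0:ℝ) \ Function.support
          (fun r => ENNReal.ofReal (w r))) = 0 := measure_mono_null hsub hnull
      rw [Measure.restrict_apply (measurableSet_support hwE)]
      by_contra hcon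
      push_neg at hcon
      have hle : volume (Set.Ioi (0:ℝ)) ≤ 0 := by
        calc volume (Set.Ioi (0:ℝ))
            ≤ volume (Function.support (fun r => ENNReal.ofReal (w r)) ∩ Set.Ioi (0:ℝ))
              + volume (Set.Ioi (0:ℝ) \ Function.support (fun r => ENNReal.ofReal (w r))) := by
              refine le_trans (measure_mono ?_) (measure_union_le _ _)
              intro r hr
              by_cases hrs : r ∈ Function.support (fun r => ENNReal.ofReal (w r))
              · exact Or.inl ⟨hrs, hr⟩
              · exact Or.inr ⟨hr, hrs⟩
          _ = 0 := by rw [h2, nonpos_iff_eq_zero.1 hcon, add_zero]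
      simp [Real.volume_Ioi] at hle
    exact this.ne'
  have hWt : W ≠ ∞ := hw_fin.ne
  have hWtend := aux_rpow_one_div_tendsto hW0 hWt
  -- rewrite intFn
  have hintFn : ∀ p : ℝ, intFn mu w p f x
      = (∫⁻ r in Set.Ioi (0:ℝ), ENNReal.ofReal (w r) * g r ^ p) ^ (1/p) := fun p => rfl
  apply tendsto_of_le_liminf_of_limsup_le
  · -- lower bound : M ≤ liminf
    rw [hM, maximalFn]
    refine iSup₂_le fun r0 hr0 => ?_
    refine le_of_forall_lt_imp_le_of_dense fun c hc => ?_
    -- c < g r0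
    set D : ℝ≥0∞ := mu (Metric.ball x r0) with hD
    have hball : (Metric.ball x r0).Nonempty := ⟨x, Metric.mem_ball_self hr0⟩
    obtain ⟨hD0, hDt⟩ := hU _ Metric.isOpen_ball hball Metric.isBounded_ball
    set N : ℝ → ℝ≥0∞ := fun s => ∫⁻ y in Metric.ball x s, (‖f y‖₊ : ℝ≥0∞) ∂mu with hN
    have hNmono : ∀ ⦃s t : ℝ⦄, s ≤ t → N s ≤ N t := fun s t hst =>
      lintegral_mono_set (Metric.ball_subset_ball hst)
    have hNt : N r0 ≠ ∞ := (hf_loc _ Metric.isBounded_ball).ne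
    have hcD : c * D < N r0 := by
      have : c < N r0 / D := hc
      exact (ENNReal.lt_div_iff_mul_lt (Or.inl hD0.ne') (Or.inl hDt.ne)).1 this
    -- left-continuity via countable union
    have hUnion : Metric.ball x r0 = ⋃ n : ℕ, Metric.ball x (r0 - 1/(n+1)) := by
      ext y
      simp only [Set.mem_iUnion, Metric.mem_ball]
      constructor
      · intro hy
        obtain ⟨n, hn⟩ := exists_nat_one_div_lt (sub_pos.2 hy)
        exact ⟨n, by linarith⟩
      · rintro ⟨n, hn⟩
        have : (0:ℝ) < 1/(n+1) := by positivity
        linarith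
    have hNsup : N r0 = ⨆ n : ℕ, N (r0 - 1/(n+1)) := by
      have hρ : ∀ s : ℝ, N s = (mu.withDensity fun y => (‖f y‖₊ : ℝ≥0∞))
          (Metric.ball x s) := fun s =>
        (withDensity_apply _ measurableSet_ball).symm
      rw [hρ, hUnion]
      have hdir : Directed (· ⊆ ·) (fun n : ℕ => Metric.ball x (r0 - 1/(n+1))) := by
        apply Monotone.directed_le
        intro a b hab
        apply Metric.ball_subset_ball
        have : (1:ℝ)/(b+1) ≤ 1/(a+1) := by
          apply one_div_le_one_div_of_le (by positivity)
          exact_mod_cast by exact_mod_cast add_le_add_left (Nat.cast_le.2 hab) 1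
        linarith
      rw [hdir.measure_iUnion]
      exact iSup_congr fun n => (hρ _).symm
    rw [hNsup] at hcD
    obtain ⟨n, hn⟩ := lt_iSup_iff.1 hcD
    set s : ℝ := max (r0 - 1/(n+1)) (r0/2) with hs
    have hs0 : 0 < s := lt_max_of_lt_right (by linarith)
    have hsr0 : s < r0 := by
      apply max_lt ?_ (by linarith)
      have : (0:ℝ) < 1/(n+1) := by positivity
      linarith
    have hNs : c * D < N s := lt_of_lt_of_le hn (hNmono (le_max_left _ _))
    -- pointwise bound on Ioo s r0
    have hgc : ∀ r ∈ Set.Ioo s r0, c ≤ g r := by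
      intro r hr
      have h1 : c * D < N r := lt_of_lt_of_le hNs (hNmono hr.1.le)
      have h2 : c < N r / D :=
        (ENNReal.lt_div_iff_mul_lt (Or.inl hD0.ne') (Or.inl hDt.ne)).2 h1
      have h3 : N r / D ≤ N r / mu (Metric.ball x r) :=
        ENNReal.div_le_div le_rfl (measure_mono (Metric.ball_subset_ball hr.2.le))
      exact (h2.trans_le h3).le
    set m : ℝ≥0∞ := ∫⁻ r in Set.Ioo s r0, ENNReal.ofReal (w r) with hm
    have hm0 : m ≠ 0 := by
      have : 0 < m := by
        rw [hm, lintegral_pos_iff_support hwE]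
        have hsub : Set.Ioo s r0 \ Function.support (fun r => ENNReal.ofReal (w r))
            ⊆ {r : ℝ | w r = 0} ∩ Set.Ioi (0:ℝ) := by
          intro r hr
          rcases hr with ⟨hr1, hr2⟩
          simp only [Function.mem_support, ne_eq, not_not, ENNReal.ofReal_eq_zero] at hr2
          exact ⟨le_antisymm hr2 (hw_nonneg r), hs0.trans hr1.1⟩
        have h2 : volume (Set.Ioo s r0 \ Function.support
            (fun r => ENNReal.ofReal (w r))) = 0 := measure_mono_null hsub hnull
        rw [Measure.restrict_apply (measurableSet_support hwE)]
        by_contra hcon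
        push_neg at hcon
        have hle : volume (Set.Ioo s r0) ≤ 0 := by
          calc volume (Set.Ioo s r0)
              ≤ volume (Function.support (fun r => ENNReal.ofReal (w r)) ∩ Set.Ioo s r0)
                + volume (Set.Ioo s r0 \ Function.support (fun r => ENNReal.ofReal (w r))) := by
                refine le_trans (measure_mono ?_) (measure_union_le _ _)
                intro r hr
                by_cases hrs : r ∈ Function.support (fun r => ENNReal.ofReal (w r))
                · exact Or.inl ⟨hrs, hr⟩
                · exact Or.inr ⟨hr, hrs⟩
            _ = 0 := by rw [h2, nonpos_iff_eq_zero.1 hcon, add_zero]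
        rw [Real.volume_Ioo] at hle
        simp only [nonpos_iff_eq_zero, ENNReal.ofReal_eq_zero] at hle
        linarith
      exact this.ne'
    have hmt : m ≠ ∞ := by
      refine (lt_of_le_of_lt ?_ hw_fin).ne
      exact lintegral_mono_set fun r hr => hs0.trans hr.1
    have hmtend : Filter.Tendsto (fun p : ℝ => c * m ^ (1/p)) Filter.atTop (nhds c) := by
      have := ENNReal.Tendsto.const_mul (a := c) (aux_rpow_one_div_tendsto hm0 hmt)
        (Or.inl one_ne_zero)
      simpa using this
    have hev : ∀ᶠ p : ℝ in Filter.atTop, c * m ^ (1/p) ≤ intFn mu w p f x := by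
      filter_upwards [Filter.eventually_ge_atTop (1:ℝ)] with p hp
      have hp0 : (0:ℝ) < p := lt_of_lt_of_le one_pos hp
      have hip : (0:ℝ) ≤ 1/p := by positivity
      rw [hintFn]
      have hint : c ^ p * m ≤ ∫⁻ r in Set.Ioi (0:ℝ), ENNReal.ofReal (w r) * g r ^ p := by
        have step1 : ∫⁻ r in Set.Ioo s r0, ENNReal.ofReal (w r) * c ^ p
            ≤ ∫⁻ r in Set.Ioo s r0, ENNReal.ofReal (w r) * g r ^ p := by
          refine lintegral_mono_ae ?_
          refine (ae_restrict_iff' measurableSet_Ioo).2 (Filter.Eventually.of_forall ?_)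
          intro r hr
          exact mul_le_mul_right (ENNReal.rpow_le_rpow (hgc r hr) hp0.le) _
        have step2 : ∫⁻ r in Set.Ioo s r0, ENNReal.ofReal (w r) * g r ^ p
            ≤ ∫⁻ r in Set.Ioi (0:ℝ), ENNReal.ofReal (w r) * g r ^ p :=
          lintegral_mono_set fun r hr => hs0.trans hr.1
        have step0 : ∫⁻ r in Set.Ioo s r0, ENNReal.ofReal (w r) * c ^ p = c ^ p * m := by
          rw [hm, lintegral_mul_const _ hwE, mul_comm]
        rw [← step0]; exact step1.trans step2
      calc c * m ^ (1/p) = (c ^ p * m) ^ (1/p) := by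
            rw [ENNReal.mul_rpow_of_nonneg _ _ hip, ← ENNReal.rpow_mul,
              mul_one_div_cancel hp0.ne', ENNReal.rpow_one]
        _ ≤ (∫⁻ r in Set.Ioi (0:ℝ), ENNReal.ofReal (w r) * g r ^ p) ^ (1/p) :=
            ENNReal.rpow_le_rpow hint hip
    calc c = Filter.liminf (fun p : ℝ => c * m ^ (1/p)) Filter.atTop := hmtend.liminf_eq.symm
      _ ≤ Filter.liminf (fun p : ℝ => intFn mu w p f x) Filter.atTop :=
          Filter.liminf_le_liminf hev
  · -- upper bound : limsup ≤ M
    by_cases hMt : M = ∞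
    · rw [hMt]; exact le_top
    have hMlim : Filter.Tendsto (fun p : ℝ => M * W ^ (1/p)) Filter.atTop (nhds M) := by
      have := ENNReal.Tendsto.const_mul (a := M) hWtend (Or.inl one_ne_zero)
      simpa using this
    have hev : ∀ᶠ p : ℝ in Filter.atTop, intFn mu w p f x ≤ M * W ^ (1/p) := by
      filter_upwards [Filter.eventually_ge_atTop (1:ℝ)] with p hp
      have hp0 : (0:ℝ) < p := lt_of_lt_of_le one_pos hp
      have hip : (0:ℝ) ≤ 1/p := by positivity
      rw [hintFn]
      have hint : ∫⁻ r in Set.Ioi (0:ℝ), ENNReal.ofReal (w r) * g r ^ p ≤ M ^ p * W := by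
        have step1 : ∫⁻ r in Set.Ioi (0:ℝ), ENNReal.ofReal (w r) * g r ^ p
            ≤ ∫⁻ r in Set.Ioi (0:ℝ), ENNReal.ofReal (w r) * M ^ p := by
          refine lintegral_mono_ae ?_
          refine (ae_restrict_iff' measurableSet_Ioi).2 (Filter.Eventually.of_forall ?_)
          intro r hr
          have hgM : g r ≤ M := le_iSup₂ (f := fun r (_ : 0 < r) => g r) r hr
          exact mul_le_mul_right (ENNReal.rpow_le_rpow hgM hp0.le) _
        have step0 : ∫⁻ r in Set.Ioi (0:ℝ), ENNReal.ofReal (w r) * M ^ p = M ^ p * W := by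
          rw [hWdef, wNorm, lintegral_mul_const _ hwE, mul_comm]
        rw [← step0]; exact step1
      calc (∫⁻ r in Set.Ioi (0:ℝ), ENNReal.ofReal (w r) * g r ^ p) ^ (1/p)
            ≤ (M ^ p * W) ^ (1/p) := ENNReal.rpow_le_rpow hint hip
        _ = M * W ^ (1/p) := by
            rw [ENNReal.mul_rpow_of_nonneg _ _ hip, ← ENNReal.rpow_mul,
              mul_one_div_cancel hp0.ne', ENNReal.rpow_one]
    calc Filter.limsup (fun p : ℝ => intFn mu w p f x) Filter.atTop
          ≤ Filter.limsup (fun p : ℝ => M * W ^ (1/p)) Filter.atTop :=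
            Filter.limsup_le_limsup hev
      _ = M := hMlim.limsup_eq
  · exact Filter.isBounded_le_of_top
  · exact Filter.isBounded_ge_of_bot
end

section
/- Let (X,d,μ) be a metric measure space, w a radius-weight and q ∈ [1,∞). If there is a sequence p_n → ∞ in [1,∞) and a constant C such that ‖I_{p_n,w}f‖_{L^q(X)} ≤ C‖f‖_{L^q(X)} for all n and all f ∈ L^q(X), then the Hardy–Littlewood maximal operator M is bounded on L^q(X) with constant at most C. -/
open MeasureTheory Metric Filter Set ENNReal

section Aux
variable {X : Type*} [MetricSpace X] [MeasurableSpace X] [BorelSpace X]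

lemma aux_ball_sup (mu : Measure X) (g : X → ℝ≥0∞) (hg : Measurable g)
    (x : X) (r : ℝ) {c : ℝ≥0∞} (hc : c < ∫⁻ y in Metric.ball x r, g y ∂mu) :
    ∃ s, s < r ∧ c < ∫⁻ y in Metric.ball x s, g y ∂mu := by
  set φ : ℕ → X → ℝ≥0∞ := fun n => (Metric.ball x (r - 1 / (n + 1))).indicator g with hφ
  have hmono : Monotone φ := by
    intro m n hmn
    refine Set.indicator_le_indicator_of_subset (Metric.ball_subset_ball ?_) (fun _ => zero_le)
    have h1 : (1 : ℝ) / (n + 1) ≤ 1 / (m + 1) := by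
      apply one_div_le_one_div_of_le
      · positivity
      · exact_mod_cast Nat.succ_le_succ hmn
    linarith
  have hsup : ∀ y, (⨆ n, φ n y) = (Metric.ball x r).indicator g y := by
    intro y
    by_cases hy : y ∈ Metric.ball x r
    · rw [Set.indicator_of_mem hy]
      refine le_antisymm (iSup_le fun n => ?_) ?_
      · by_cases hy' : y ∈ Metric.ball x (r - 1 / (n + 1))
        · simp only [hφ, Set.indicator_of_mem hy']; exact le_rfl
        · simp only [hφ, Set.indicator_of_notMem hy']; exact zero_le
      · have hd := Metric.mem_ball.1 hy
        obtain ⟨n, hn⟩ := exists_nat_one_div_lt (sub_pos.2 hd)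
        refine le_iSup_of_le n ?_
        have hy' : y ∈ Metric.ball x (r - 1 / (n + 1)) := by
          rw [Metric.mem_ball]
          push_cast at hn ⊢
          linarith
        simp only [hφ, Set.indicator_of_mem hy']; exact le_rfl
    · rw [Set.indicator_of_notMem hy]
      refine le_antisymm (iSup_le fun n => ?_) zero_le
      have hy' : y ∉ Metric.ball x (r - 1 / (n + 1)) := fun hy' =>
        hy (Metric.ball_subset_ball
          (sub_le_self r (by positivity)) hy')
      simp only [hφ, Set.indicator_of_notMem hy']
      exact le_rfl
  have key : (∫⁻ y in Metric.ball x r, g y ∂mu)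
      = ⨆ n : ℕ, ∫⁻ y in Metric.ball x (r - 1 / (n + 1 : ℝ)), g y ∂mu := by
    rw [← lintegral_indicator measurableSet_ball]
    calc (∫⁻ y, (Metric.ball x r).indicator g y ∂mu)
        = ∫⁻ y, ⨆ n, φ n y ∂mu := by
          refine lintegral_congr fun y => (hsup y).symm
      _ = ⨆ n, ∫⁻ y, φ n y ∂mu :=
          lintegral_iSup (fun n => hg.indicator measurableSet_ball) hmono
      _ = ⨆ n : ℕ, ∫⁻ y in Metric.ball x (r - 1 / (n + 1 : ℝ)), g y ∂mu := by
          refine iSup_congr fun n => ?_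
          rw [hφ]; exact lintegral_indicator measurableSet_ball g
  rw [key] at hc
  obtain ⟨n, hn⟩ := lt_iSup_iff.1 hc
  exact ⟨r - 1 / (n + 1), sub_lt_self r (by positivity), hn⟩


lemma aux_lsc (mu : Measure X) (g : X → ℝ≥0∞) (hg : Measurable g) :
    LowerSemicontinuous (fun z : X × ℝ => ∫⁻ y in Metric.ball z.1 z.2, g y ∂mu) := by
  rintro ⟨x, r⟩ c hc
  obtain ⟨s, hs, hcs⟩ := aux_ball_sup mu g hg x r hc
  have h1 : ∀ᶠ x' in nhds x, dist x' x < (r - s) / 2 := by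
    have hmem := Metric.ball_mem_nhds x (show (0:ℝ) < (r - s) / 2 by linarith)
    exact Filter.eventually_of_mem hmem fun y hy => Metric.mem_ball.1 hy
  have h2 : ∀ᶠ r' in nhds r, (r + s) / 2 < r' := eventually_gt_nhds (by linarith)
  refine (h1.prod_nhds h2).mono ?_
  rintro ⟨x', r'⟩ ⟨hx', hr'⟩
  refine lt_of_lt_of_le hcs (lintegral_mono_set fun y hy => ?_)
  have hyx := Metric.mem_ball.1 hy
  rw [Metric.mem_ball]
  calc dist y x' ≤ dist y x + dist x x' := dist_triangle y x x'
    _ < s + (r - s) / 2 := by rw [dist_comm x x']; linarith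
    _ = (r + s) / 2 := by ring
    _ < r' := hr'

lemma aux_meas_ballAvg (mu : Measure X) (f : X → ℝ)
    (hfm : Measurable fun y => (‖f y‖₊ : ℝ≥0∞)) :
    Measurable (fun z : X × ℝ => ballAvg mu f z.1 z.2) := by
  have hnum := (aux_lsc mu _ hfm).measurable
  have hden : Measurable (fun z : X × ℝ => mu (Metric.ball z.1 z.2)) := by
    have := (aux_lsc mu (fun _ => 1) measurable_const).measurable
    simpa [setLIntegral_one] using this
  exact hnum.div hden

lemma aux_meas_intFn (mu : Measure X) (w : ℝ → ℝ) (hw_meas : Measurable w)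
    (pp : ℝ) (f : X → ℝ) (hfm : Measurable fun y => (‖f y‖₊ : ℝ≥0∞)) :
    Measurable (intFn mu w pp f) := by
  unfold intFn
  have hA := aux_meas_ballAvg mu f hfm
  have hint : Measurable (fun z : X × ℝ =>
      ENNReal.ofReal (w z.2) * (ballAvg mu f z.1 z.2) ^ pp) :=
    ((hw_meas.comp measurable_snd).ennreal_ofReal).mul (hA.pow_const pp)
  have := Measurable.lintegral_prod_right' (ν := volume.restrict (Set.Ioi (0:ℝ))) hint
  exact this.pow_const _


lemma aux_key (mu : Measure X)
    (hU : ∀ U : Set X, IsOpen U → U.Nonempty → Bornology.IsBounded U →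
      0 < mu U ∧ mu U < ∞)
    (w : ℝ → ℝ) (hw_meas : Measurable w) (hw_nonneg : ∀ r, 0 ≤ w r)
    (hw_fin : wNorm w < ∞)
    (hw_ne : ∀ᵐ r ∂(volume.restrict (Set.Ioi (0 : ℝ))), w r ≠ 0)
    (q : ℝ) (hq : 1 ≤ q)
    (p : ℕ → ℝ) (hp : ∀ n, 1 ≤ p n) (hptop : Filter.Tendsto p Filter.atTop Filter.atTop)
    (f : X → ℝ) (hfm : Measurable fun y => (‖f y‖₊ : ℝ≥0∞)) (x : X) :
    maximalFn mu f x ^ q ≤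
      Filter.liminf (fun n => (intFn mu w (p n) f x) ^ q) Filter.atTop := by
  unfold maximalFn intFn
  unfold wNorm at hw_fin
  have hq0 : (0:ℝ) < q := lt_of_lt_of_le one_pos hq
  set M : ℝ≥0∞ := ⨆ (r : ℝ) (_ : 0 < r), ballAvg mu f x r with hM
  set L := Filter.liminf (fun n => ((∫⁻ r in Set.Ioi (0 : ℝ),
      ENNReal.ofReal (w r) * (ballAvg mu f x r) ^ (p n)) ^ (1 / p n)) ^ q) Filter.atTop with hL
  by_contra hcon
  push_neg at hcon
  obtain ⟨c, hLc, hcM⟩ := exists_between hcon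
  refine absurd hLc (not_lt.2 ?_)
  -- now show c ≤ L
  have hc_top : c ≠ ∞ := (hcM.trans_le le_top).ne
  set t : ℝ≥0∞ := c ^ (1/q) with ht
  have htq : t ^ q = c := by
    rw [ht, ← ENNReal.rpow_mul, one_div_mul_cancel hq0.ne', ENNReal.rpow_one]
  have htM : t < M := by
    have := ENNReal.rpow_lt_rpow hcM (one_div_pos.2 hq0)
    rwa [← ENNReal.rpow_mul, mul_one_div_cancel hq0.ne', ENNReal.rpow_one] at this
  rw [hM, lt_iSup_iff] at htM
  obtain ⟨r, htM⟩ := htM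
  rw [lt_iSup_iff] at htM
  obtain ⟨hr_pos, hA⟩ := htM
  -- the ball
  obtain ⟨hD0, hDtop⟩ := hU (Metric.ball x r) Metric.isOpen_ball
    ⟨x, Metric.mem_ball_self hr_pos⟩ Metric.isBounded_ball
  have hN : t * mu (Metric.ball x r) < ∫⁻ y in Metric.ball x r, (‖f y‖₊ : ℝ≥0∞) ∂mu := by
    rw [ballAvg] at hA
    exact (ENNReal.lt_div_iff_mul_lt (Or.inl hD0.ne') (Or.inl hDtop.ne)).1 hA
  obtain ⟨s, hsr, hNs⟩ := aux_ball_sup mu _ hfm x r hN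
  set s' : ℝ := max s 0 with hs'
  have hs'r : s' < r := max_lt hsr hr_pos
  -- on (s', r], the average is ≥ t
  have hAall : ∀ ρ ∈ Set.Ioc s' r, t ≤ ballAvg mu f x ρ := by
    rintro ρ ⟨h1, h2⟩
    have hstep : (∫⁻ y in Metric.ball x s, (‖f y‖₊ : ℝ≥0∞) ∂mu) / mu (Metric.ball x r)
        ≤ ballAvg mu f x ρ := by
      rw [ballAvg]
      exact ENNReal.div_le_div
        (lintegral_mono_set (Metric.ball_subset_ball
          (le_trans (le_max_left s 0) h1.le)))
        (measure_mono (Metric.ball_subset_ball h2))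
    refine le_trans ?_ hstep
    rw [ENNReal.le_div_iff_mul_le (Or.inl hD0.ne') (Or.inl hDtop.ne)]
    exact hNs.le
  -- the weight mass W
  set W : ℝ≥0∞ := ∫⁻ ρ in Set.Ioc s' r, ENNReal.ofReal (w ρ) with hW
  have hIocIoi : Set.Ioc s' r ⊆ Set.Ioi (0:ℝ) := fun ρ hρ =>
    lt_of_le_of_lt (le_max_right s 0) hρ.1
  have hWtop : W ≠ ∞ := (lt_of_le_of_lt (lintegral_mono_set hIocIoi) hw_fin).ne
  have hW0 : W ≠ 0 := by
    intro h0
    have hae : (fun ρ => ENNReal.ofReal (w ρ)) =ᵐ[volume.restrict (Set.Ioc s' r)] 0 :=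
      (lintegral_eq_zero_iff hw_meas.ennreal_ofReal).1 h0
    have hne : ∀ᵐ ρ ∂(volume.restrict (Set.Ioc s' r)), w ρ ≠ 0 :=
      ae_mono (Measure.restrict_mono hIocIoi le_rfl) hw_ne
    have hfalse : ∀ᵐ ρ ∂(volume.restrict (Set.Ioc s' r)), False := by
      filter_upwards [hae, hne] with ρ h1 h2
      exact h2 (le_antisymm (ENNReal.ofReal_eq_zero.1 h1) (hw_nonneg ρ))
    have hbot : (volume.restrict (Set.Ioc s' r)) = 0 :=
      ae_eq_bot.1 (Filter.eventually_false_iff_eq_bot.1 hfalse)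
    have hval : (volume.restrict (Set.Ioc s' r)) Set.univ = volume (Set.Ioc s' r) :=
      Measure.restrict_apply_univ _
    rw [hbot] at hval
    have : volume (Set.Ioc s' r) = 0 := by simpa using hval.symm
    rw [Real.volume_Ioc] at this
    exact absurd this (by simp [ENNReal.ofReal_eq_zero]; linarith)
  -- lower bound for the integral functional
  have hlow : ∀ n : ℕ, t * W ^ (1 / p n) ≤
      (∫⁻ ρ in Set.Ioi (0 : ℝ), ENNReal.ofReal (w ρ) * (ballAvg mu f x ρ) ^ (p n)) ^ (1 / p n) := by
    intro n
    have hpn0 : (0:ℝ) < p n := lt_of_lt_of_le one_pos (hp n)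
    have step1 : (∫⁻ ρ in Set.Ioc s' r, ENNReal.ofReal (w ρ) * t ^ (p n))
        ≤ ∫⁻ ρ in Set.Ioc s' r, ENNReal.ofReal (w ρ) * (ballAvg mu f x ρ) ^ (p n) := by
      refine lintegral_mono_ae ?_
      refine (ae_restrict_iff' measurableSet_Ioc).2 (Filter.Eventually.of_forall ?_)
      intro ρ hρ
      exact mul_le_mul_right (ENNReal.rpow_le_rpow (hAall ρ hρ) hpn0.le) _
    have step2 : (∫⁻ ρ in Set.Ioc s' r, ENNReal.ofReal (w ρ) * t ^ (p n)) = W * t ^ (p n) :=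
      lintegral_mul_const _ hw_meas.ennreal_ofReal
    have step3 : (∫⁻ ρ in Set.Ioc s' r, ENNReal.ofReal (w ρ) * (ballAvg mu f x ρ) ^ (p n))
        ≤ ∫⁻ ρ in Set.Ioi (0 : ℝ), ENNReal.ofReal (w ρ) * (ballAvg mu f x ρ) ^ (p n) :=
      lintegral_mono_set hIocIoi
    have hchain : W * t ^ (p n) ≤
        ∫⁻ ρ in Set.Ioi (0 : ℝ), ENNReal.ofReal (w ρ) * (ballAvg mu f x ρ) ^ (p n) :=
      step2 ▸ (step1.trans step3)
    have := ENNReal.rpow_le_rpow hchain (by positivity : (0:ℝ) ≤ 1 / p n)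
    rwa [ENNReal.mul_rpow_of_nonneg _ _ (by positivity : (0:ℝ) ≤ 1 / p n),
      ← ENNReal.rpow_mul, mul_one_div_cancel hpn0.ne', ENNReal.rpow_one, mul_comm] at this
  -- pass to q-th powers
  have hlowq : ∀ n : ℕ, t ^ q * W ^ ((1 / p n) * q) ≤
      ((∫⁻ ρ in Set.Ioi (0 : ℝ), ENNReal.ofReal (w ρ) * (ballAvg mu f x ρ) ^ (p n)) ^ (1 / p n)) ^ q := by
    intro n
    calc t ^ q * W ^ ((1 / p n) * q) = (t * W ^ (1 / p n)) ^ q := by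
          rw [ENNReal.mul_rpow_of_nonneg _ _ hq0.le, ENNReal.rpow_mul]
      _ ≤ _ := ENNReal.rpow_le_rpow (hlow n) hq0.le
  -- the auxiliary sequence converges to t^q
  have hexp : Filter.Tendsto (fun n => (1 / p n) * q) Filter.atTop (nhds 0) := by
    have h1 : Filter.Tendsto (fun n => (p n)⁻¹) Filter.atTop (nhds 0) :=
      hptop.inv_tendsto_atTop
    have := h1.mul_const q
    simpa [one_div] using this
  have hWconv : Filter.Tendsto (fun n => W ^ ((1 / p n) * q)) Filter.atTop (nhds 1) := by
    set b : ℝ := W.toReal with hb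
    have hb0 : 0 < b := ENNReal.toReal_pos hW0 hWtop
    have hWb : W = ENNReal.ofReal b := (ENNReal.ofReal_toReal hWtop).symm
    have hbr : ∀ e : ℝ, W ^ e = ENNReal.ofReal (b ^ e) := by
      intro e; rw [hWb, ENNReal.ofReal_rpow_of_pos hb0]
    have hreal : Filter.Tendsto (fun n => b ^ ((1 / p n) * q)) Filter.atTop (nhds (b ^ (0:ℝ))) :=
      (Real.continuousAt_const_rpow hb0.ne').tendsto.comp hexp
    rw [Real.rpow_zero] at hreal
    have := (ENNReal.continuous_ofReal.tendsto 1).comp hreal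
    simp only [Function.comp_def] at this ⊢
    simpa [hbr, ENNReal.ofReal_one] using this
  have hTend : Filter.Tendsto (fun n => t ^ q * W ^ ((1 / p n) * q)) Filter.atTop (nhds (t ^ q)) := by
    have := ENNReal.Tendsto.const_mul (a := t ^ q) hWconv (Or.inl one_ne_zero)
    simpa using this
  have hliminf : t ^ q ≤ L := by
    have h1 : Filter.liminf (fun n => t ^ q * W ^ ((1 / p n) * q)) Filter.atTop = t ^ q :=
      hTend.liminf_eq
    rw [← h1, hL]
    exact Filter.liminf_le_liminf (Filter.Eventually.of_forall hlowq)
  rw [← htq]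
  exact hliminf
end Aux


theorem maximal_bounded_of_intFn_seq_bounded {X : Type*} [MetricSpace X] [MeasurableSpace X] [BorelSpace X]
    (mu : Measure X)
    (hXunbdd : ¬ Bornology.IsBounded (Set.univ : Set X))
    (hXinf : mu Set.univ = ∞)
    (hU : ∀ U : Set X, IsOpen U → U.Nonempty → Bornology.IsBounded U →
      0 < mu U ∧ mu U < ∞)
    (w : ℝ → ℝ) (hw_meas : Measurable w) (hw_nonneg : ∀ r, 0 ≤ w r)
    (hw_fin : wNorm w < ∞)
    (hw_ne : ∀ᵐ r ∂(volume.restrict (Set.Ioi (0 : ℝ))), w r ≠ 0)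
    (q : ℝ) (hq : 1 ≤ q) (C : ℝ≥0∞)
    (p : ℕ → ℝ) (hp : ∀ n, 1 ≤ p n) (hptop : Filter.Tendsto p Filter.atTop Filter.atTop)
    (hI : ∀ n, ∀ f : X → ℝ, MemLp f (ENNReal.ofReal q) mu →
      lqNorm mu (intFn mu w (p n) f) (ENNReal.ofReal q) ≤
        C * lqNorm mu (fun x => ((‖f x‖₊ : ℝ≥0∞))) (ENNReal.ofReal q)) :
    ∀ f : X → ℝ, MemLp f (ENNReal.ofReal q) mu →
      lqNorm mu (maximalFn mu f) (ENNReal.ofReal q) ≤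
        C * lqNorm mu (fun x => ((‖f x‖₊ : ℝ≥0∞))) (ENNReal.ofReal q) := by
  intro f hf
  have hq0 : (0:ℝ) < q := lt_of_lt_of_le one_pos hq
  have hq'ne : ENNReal.ofReal q ≠ ∞ := ENNReal.ofReal_ne_top
  have hq'toReal : (ENNReal.ofReal q).toReal = q := ENNReal.toReal_ofReal hq0.le
  have hfae := hf.aestronglyMeasurable
  have hff' : f =ᵐ[mu] hfae.mk f := hfae.ae_eq_mk
  set f' : X → ℝ := hfae.mk f with hf'def
  have hf'm : Measurable fun y => (‖f' y‖₊ : ℝ≥0∞) :=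
    hfae.stronglyMeasurable_mk.measurable.nnnorm.coe_nnreal_ennreal
  have hBA : ballAvg mu f = ballAvg mu f' := by
    funext x r
    unfold ballAvg
    congr 1
    exact lintegral_congr_ae (ae_restrict_of_ae (hff'.mono fun y hy => by simp only [hy]))
  have hMeq : maximalFn mu f = maximalFn mu f' := by
    funext x; unfold maximalFn; rw [hBA]
  have hIeq : ∀ pp : ℝ, intFn mu w pp f = intFn mu w pp f' := by
    intro pp; funext x; unfold intFn; rw [hBA]
  set R := lqNorm mu (fun x => ((‖f x‖₊ : ℝ≥0∞))) (ENNReal.ofReal q) with hRdef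
  have hkey : ∀ x, maximalFn mu f x ^ q ≤
      Filter.liminf (fun n => (intFn mu w (p n) f x) ^ q) Filter.atTop := by
    intro x
    simp only [hMeq, hIeq]
    exact aux_key mu hU w hw_meas hw_nonneg hw_fin hw_ne q hq p hp hptop f' hf'm x
  have hmeas : ∀ n, Measurable fun x => (intFn mu w (p n) f x) ^ q := by
    intro n
    rw [hIeq]
    exact (aux_meas_intFn mu w hw_meas (p n) f' hf'm).pow_const q
  have hfatou : (∫⁻ x, maximalFn mu f x ^ q ∂mu) ≤
      Filter.liminf (fun n => ∫⁻ x, (intFn mu w (p n) f x) ^ q ∂mu) Filter.atTop :=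
    le_trans (lintegral_mono hkey) (lintegral_liminf_le hmeas)
  have hbound : ∀ n, (∫⁻ x, (intFn mu w (p n) f x) ^ q ∂mu) ≤ (C * R) ^ q := by
    intro n
    have h2 := hI n f hf
    have h3 : lqNorm mu (intFn mu w (p n) f) (ENNReal.ofReal q) =
        (∫⁻ x, (intFn mu w (p n) f x) ^ q ∂mu) ^ (1/q) := by
      rw [lqNorm, if_neg hq'ne, hq'toReal]
    rw [h3] at h2
    have h4 := ENNReal.rpow_le_rpow h2 hq0.le
    rwa [← ENNReal.rpow_mul, one_div_mul_cancel hq0.ne', ENNReal.rpow_one] at h4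
  have h5 : Filter.liminf (fun n => ∫⁻ x, (intFn mu w (p n) f x) ^ q ∂mu) Filter.atTop
      ≤ (C * R) ^ q := by
    calc Filter.liminf (fun n => ∫⁻ x, (intFn mu w (p n) f x) ^ q ∂mu) Filter.atTop
        ≤ Filter.liminf (fun _ : ℕ => (C * R) ^ q) Filter.atTop :=
          Filter.liminf_le_liminf (Filter.Eventually.of_forall hbound)
      _ = (C * R) ^ q := Filter.liminf_const _
  have h6 : (∫⁻ x, maximalFn mu f x ^ q ∂mu) ≤ (C * R) ^ q := hfatou.trans h5
  have h7 := ENNReal.rpow_le_rpow h6 (by positivity : (0:ℝ) ≤ 1/q)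
  rw [← ENNReal.rpow_mul, mul_one_div_cancel hq0.ne', ENNReal.rpow_one] at h7
  calc lqNorm mu (maximalFn mu f) (ENNReal.ofReal q)
      = (∫⁻ x, maximalFn mu f x ^ q ∂mu) ^ (1/q) := by
        rw [lqNorm, if_neg hq'ne, hq'toReal]
    _ ≤ C * R := h7
end

section
/- Let G be a non-compact Lie group equipped with a left-invariant distance d and left Haar measure λ, and let Δ denote the modular function (λ(Bx)=Δ(x)λ(B)). Then for every locally integrable f ≥ 0, every r > 0, and every p ∈ [1,∞), ∫_G (Af(x,r))^p dλ(x) ≤ ( (1/λ(B(e,r))) ∫_{B(e,r)} Δ(y^{-1}) dλ(y) ) · ‖f‖_{L^p(G)}^p, where Af(x,r) = (1/λ(B(x,r))) ∫_{B(x,r)} f dλ. -/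
open MeasureTheory Metric Filter Set ENNReal

theorem avg_lp_bound_left_haar {G : Type*} [Group G] [MetricSpace G] [IsTopologicalGroup G]
    [MeasurableSpace G] [BorelSpace G] [LocallyCompactSpace G] [ProperSpace G]
    [NoncompactSpace G]
    (hd : ∀ g x y : G, dist (g * x) (g * y) = dist x y)
    (lam : Measure G) [lam.IsHaarMeasure]
    (Delta : G → ℝ≥0∞)
    (hDelta : ∀ (y : G) (s : Set G), MeasurableSet s →
      lam ((fun x => x * y) '' s) = Delta y * lam s)
    (f : G → ℝ) (hf_meas : Measurable f)
    (hf_loc : ∀ s : Set G, Bornology.IsBounded s →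
      (∫⁻ y in s, (‖f y‖₊ : ℝ≥0∞) ∂lam) < ∞)
    (hf_nonneg : ∀ x, 0 ≤ f x)
    (r : ℝ) (hr : 0 < r) (p : ℝ) (hp : 1 ≤ p) :
    (∫⁻ x, (ballAvg lam f x r) ^ p ∂lam) ≤
      ((∫⁻ y in Metric.ball (1 : G) r, Delta y⁻¹ ∂lam) / lam (Metric.ball (1 : G) r)) *
        ∫⁻ x, ((‖f x‖₊ : ℝ≥0∞)) ^ p ∂lam := by
  have hp0 : (0:ℝ) < p := lt_of_lt_of_le one_pos hp
  set B := Metric.ball (1 : G) r with hB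
  have hBmeas : MeasurableSet B := measurableSet_ball
  set V := lam B with hVdef
  have hV0 : V ≠ 0 := (measure_ball_pos lam 1 hr).ne'
  have hVtop : V ≠ ∞ := measure_ball_lt_top.ne
  set g : G → ℝ≥0∞ := fun z => (‖f z‖₊ : ℝ≥0∞) with hg
  have hgmeas : Measurable g := hf_meas.nnnorm.coe_nnreal_ennreal
  set C := ∫⁻ x, g x ^ p ∂lam with hC
  -- preimage-image identity for right translations
  have hpreim : ∀ (y : G) (s : Set G), (fun x => x * y) ⁻¹' s = (fun x => x * y⁻¹) '' s := by
    intro y s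
    ext z
    simp only [Set.mem_preimage, Set.mem_image]
    constructor
    · intro h; exact ⟨z * y, h, mul_inv_cancel_right z y⟩
    · rintro ⟨w, hw, rfl⟩; simpa [mul_assoc] using hw
  -- ball descriptions
  have hball_pre : ∀ x : G, (fun y => x * y) ⁻¹' (Metric.ball x r) = B := by
    intro x
    ext y
    have key : dist (x * y) x = dist y 1 := by
      calc dist (x * y) x = dist (x * y) (x * 1) := by rw [mul_one]
        _ = dist y 1 := hd x y 1
    simp only [Set.mem_preimage, Metric.mem_ball, hB, key]
  have hball_pre' : ∀ x : G, Metric.ball x r = (fun y => x⁻¹ * y) ⁻¹' B := by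
    intro x
    ext y
    have key : dist (x⁻¹ * y) (1 : G) = dist y x := by
      calc dist (x⁻¹ * y) (1 : G) = dist (x⁻¹ * y) (x⁻¹ * x) := by rw [inv_mul_cancel]
        _ = dist y x := hd x⁻¹ y x
    simp only [Set.mem_preimage, Metric.mem_ball, hB, key]
  have hmeasball : ∀ x : G, lam (Metric.ball x r) = V := by
    intro x
    rw [hball_pre' x, measure_preimage_mul lam x⁻¹ B]
  have hnum : ∀ x : G, (∫⁻ y in Metric.ball x r, g y ∂lam) = ∫⁻ y in B, g (x * y) ∂lam := by
    intro x
    have h := (measurePreserving_mul_left lam x).setLIntegral_comp_preimage_emb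
      (MeasurableEquiv.mulLeft x).measurableEmbedding g (Metric.ball x r)
    rw [hball_pre x] at h
    exact h.symm
  have hAvg : ∀ x : G, ballAvg lam f x r = (∫⁻ y in B, g (x * y) ∂lam) / V := by
    intro x
    rw [ballAvg, hmeasball x, ← hnum x]
  -- Jensen's inequality pointwise
  have hjensen : ∀ x : G, ((∫⁻ y in B, g (x * y) ∂lam) / V) ^ p
      ≤ (∫⁻ y in B, g (x * y) ^ p ∂lam) / V := by
    intro x
    rcases eq_or_lt_of_le hp with hp1 | hp1
    · rw [← hp1]
      simp [ENNReal.rpow_one]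
    set A := ∫⁻ y in B, g (x * y) ∂lam with hA
    set N := ∫⁻ y in B, g (x * y) ^ p ∂lam with hN
    have hApow : A ^ p ≤ N * V ^ (p - 1) := by
      set q := Real.conjExponent p with hq
      have hpq : p.HolderConjugate q := Real.HolderConjugate.conjExponent hp1
      have hqp : (1 / q) * p = p - 1 := by
        have h1 : 1 / q = 1 - 1 / p := by
          have := hpq.inv_add_inv_eq_one
          simp only [one_div] at this ⊢
          linarith
        rw [h1]
        field_simp
      have hholder := ENNReal.lintegral_mul_le_Lp_mul_Lq (lam.restrict B) hpq
        ((hgmeas.comp (measurable_const_mul x)).aemeasurable)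
        (aemeasurable_const (b := (1:ℝ≥0∞)))
      simp only [Pi.mul_apply, mul_one, ENNReal.one_rpow, lintegral_one,
        Measure.restrict_apply_univ] at hholder
      -- hholder : A ≤ (N)^(1/p) * V^(1/q)
      have hle : A ^ p ≤ ((N ^ (1/p)) * (V ^ (1/q))) ^ p :=
        ENNReal.rpow_le_rpow hholder (le_of_lt hp0)
      rwa [ENNReal.mul_rpow_of_nonneg _ _ (le_of_lt hp0), ← ENNReal.rpow_mul,
        ← ENNReal.rpow_mul, one_div, inv_mul_cancel₀ (ne_of_gt hp0),
        ENNReal.rpow_one, hqp] at hle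
    have hdiv : (A / V) ^ p = A ^ p / V ^ p := ENNReal.div_rpow_of_nonneg A V (le_of_lt hp0)
    rw [hdiv]
    calc A ^ p / V ^ p ≤ (N * V ^ (p - 1)) / V ^ p :=
          ENNReal.div_le_div_right hApow _
      _ = N * (V ^ (p - 1) / V ^ p) := by rw [mul_div_assoc]
      _ = N / V := by
          rw [← ENNReal.rpow_sub _ _ hV0 hVtop]
          norm_num
          rw [ENNReal.rpow_neg_one, div_eq_mul_inv]
  -- measurability of the modular factor
  have hDeq : ∀ y : G, Delta y⁻¹ * V = ∫⁻ x, B.indicator (fun _ => (1:ℝ≥0∞)) (x * y) ∂lam := by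
    intro y
    have hind : (fun x => B.indicator (fun _ => (1:ℝ≥0∞)) (x * y))
        = ((fun x => x * y) ⁻¹' B).indicator (fun _ => (1:ℝ≥0∞)) := by
      ext x
      by_cases hx : x * y ∈ B <;> simp [Set.indicator, hx]
    rw [hind, lintegral_indicator ((measurable_mul_const y) hBmeas) _, setLIntegral_one,
      hpreim y B, hDelta y⁻¹ B hBmeas]
  have hLmeas : Measurable fun y : G => ∫⁻ x, B.indicator (fun _ => (1:ℝ≥0∞)) (x * y) ∂lam := by
    have hFm : Measurable fun q : G × G => B.indicator (fun _ => (1:ℝ≥0∞)) (q.2 * q.1) := by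
      have : Measurable fun q : G × G => q.2 * q.1 := measurable_snd.mul measurable_fst
      exact (measurable_one.indicator hBmeas).comp this
    exact hFm.lintegral_prod_right'
  have hDmeas : Measurable fun y : G => Delta y⁻¹ := by
    have heq : (fun y : G => Delta y⁻¹)
        = fun y => (∫⁻ x, B.indicator (fun _ => (1:ℝ≥0∞)) (x * y) ∂lam) / V := by
      funext y
      rw [← hDeq y, mul_div_assoc, ENNReal.div_self hV0 hVtop, mul_one]
    rw [heq]
    exact hLmeas.div_const V
  -- the inner translated integral
  have hinner : ∀ y : G, (∫⁻ x, g (x * y) ^ p ∂lam) = Delta y⁻¹ * C := by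
    intro y
    have hmap : Measure.map (fun x => x * y) lam = Delta y⁻¹ • lam := by
      refine Measure.ext fun s hs => ?_
      rw [Measure.map_apply (measurable_mul_const y) hs, Measure.smul_apply, smul_eq_mul,
        hpreim y s, hDelta y⁻¹ s hs]
    calc ∫⁻ x, g (x * y) ^ p ∂lam
        = ∫⁻ z, g z ^ p ∂(Measure.map (fun x => x * y) lam) :=
          (lintegral_map (hgmeas.pow_const p) (measurable_mul_const y)).symm
      _ = Delta y⁻¹ * C := by rw [hmap, lintegral_smul_measure, hC, smul_eq_mul]
  -- main chain
  calc (∫⁻ x, (ballAvg lam f x r) ^ p ∂lam)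
      ≤ ∫⁻ x, (∫⁻ y in B, g (x * y) ^ p ∂lam) / V ∂lam := by
        refine lintegral_mono fun x => ?_
        rw [hAvg x]
        exact hjensen x
    _ = (∫⁻ x, ∫⁻ y in B, g (x * y) ^ p ∂lam ∂lam) / V := by
        simp_rw [div_eq_mul_inv]
        exact lintegral_mul_const' V⁻¹ _ (ENNReal.inv_ne_top.2 hV0)
    _ = (∫⁻ y in B, ∫⁻ x, g (x * y) ^ p ∂lam ∂lam) / V := by
        rw [lintegral_lintegral_swap]
        exact ((hgmeas.comp measurable_mul).pow_const p).aemeasurable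
    _ = ((∫⁻ y in B, Delta y⁻¹ ∂lam) * C) / V := by
        congr 1
        rw [← lintegral_mul_const C hDmeas]
        exact lintegral_congr fun y => hinner y
    _ = ((∫⁻ y in B, Delta y⁻¹ ∂lam) / V) * C := by
        rw [div_eq_mul_inv, div_eq_mul_inv, mul_right_comm]
end

section
/- Let G be a non-compact Lie group with left-invariant distance d and left Haar measure λ, and let w be a radius-weight whose G-norm ‖w‖_G := ∫_0^∞ (w(r)/λ(B(e,r))) ∫_{B(e,r)} Δ(y^{-1}) dλ(y) dr is finite. Then for all 1 ≤ p ≤ q < ∞ and all locally integrable f, ‖I_{p,w}f‖_{L^q(G)} ≤ ‖w‖^{(q-p)/(qp)} ‖w‖_G^{1/q} ‖f‖_{L^q(G)}. -/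
open MeasureTheory Metric Filter Set ENNReal

/-- The `G`-norm of a radius-weight `w`. -/
noncomputable def gNorm {G : Type*} [Group G] [MetricSpace G] [MeasurableSpace G]
    (lam : Measure G) (Delta : G → ℝ≥0∞) (w : ℝ → ℝ) : ℝ≥0∞ :=
  ∫⁻ r in Set.Ioi (0 : ℝ), ENNReal.ofReal (w r) *
    ((∫⁻ y in Metric.ball (1 : G) r, Delta y⁻¹ ∂lam) / lam (Metric.ball (1 : G) r))

/-- Jensen-type inequality, power form. -/
lemma jensen_pow {α : Type*} [MeasurableSpace α] (μ : Measure α) {g : α → ℝ≥0∞}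
    (hg : AEMeasurable g μ) {q : ℝ} (hq : 1 ≤ q) :
    (∫⁻ a, g a ∂μ) ^ q ≤ (μ univ) ^ (q - 1) * ∫⁻ a, g a ^ q ∂μ := by
  rcases eq_or_lt_of_le hq with h1 | h1
  · simp [← h1]
  · have hq0 : q ≠ 0 := by positivity
    have hconj : q.HolderConjugate (q / (q - 1)) :=
      (Real.holderConjugate_iff_eq_conjExponent h1).2 rfl
    have H := ENNReal.lintegral_mul_le_Lp_mul_Lq μ hconj hg
      (aemeasurable_const (b := (1 : ℝ≥0∞)))
    simp only [Pi.mul_apply, mul_one, ENNReal.one_rpow, lintegral_const,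
      one_mul] at H
    have H2 := ENNReal.rpow_le_rpow H (le_of_lt (lt_trans zero_lt_one h1) : (0:ℝ) ≤ q)
    rw [ENNReal.mul_rpow_of_nonneg _ _ (by linarith : (0:ℝ) ≤ q),
      ← ENNReal.rpow_mul, ← ENNReal.rpow_mul] at H2
    have e1 : 1 / q * q = 1 := by field_simp
    have e2 : 1 / (q / (q - 1)) * q = q - 1 := by field_simp
    rw [e1, e2, ENNReal.rpow_one, mul_comm] at H2
    exact H2

/-- Jensen-type inequality, root form. -/
lemma jensen_root {α : Type*} [MeasurableSpace α] (μ : Measure α) {g : α → ℝ≥0∞}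
    (hg : AEMeasurable g μ) {q : ℝ} (hq : 1 ≤ q) :
    ∫⁻ a, g a ∂μ ≤ (μ univ) ^ (1 - 1/q) * (∫⁻ a, g a ^ q ∂μ) ^ (1/q) := by
  have hq0 : 0 < q := lt_of_lt_of_le zero_lt_one hq
  have h := ENNReal.rpow_le_rpow (jensen_pow μ hg hq) (by positivity : (0:ℝ) ≤ 1/q)
  rw [← ENNReal.rpow_mul, mul_one_div, div_self (ne_of_gt hq0), ENNReal.rpow_one] at h
  rw [ENNReal.mul_rpow_of_nonneg _ _ (by positivity : (0:ℝ) ≤ 1/q), ← ENNReal.rpow_mul] at h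
  have e : (q - 1) * (1/q) = 1 - 1/q := by field_simp
  rwa [e] at h

set_option maxHeartbeats 2000000 in
theorem intFn_lq_bound_left_haar {G : Type*} [Group G] [MetricSpace G] [IsTopologicalGroup G]
    [MeasurableSpace G] [BorelSpace G] [LocallyCompactSpace G] [ProperSpace G]
    [NoncompactSpace G]
    (hd : ∀ g x y : G, dist (g * x) (g * y) = dist x y)
    (lam : Measure G) [lam.IsHaarMeasure]
    (Delta : G → ℝ≥0∞)
    (hDelta : ∀ (y : G) (s : Set G), MeasurableSet s →
      lam ((fun x => x * y) '' s) = Delta y * lam s)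
    (w : ℝ → ℝ) (hw_meas : Measurable w) (hw_nonneg : ∀ r, 0 ≤ w r)
    (hw_fin : wNorm w < ∞)
    (hw_ne : ∀ᵐ r ∂(volume.restrict (Set.Ioi (0 : ℝ))), w r ≠ 0)
    (hwG : gNorm lam Delta w < ∞)
    (f : G → ℝ) (hf_meas : Measurable f)
    (hf_loc : ∀ s : Set G, Bornology.IsBounded s →
      (∫⁻ y in s, (‖f y‖₊ : ℝ≥0∞) ∂lam) < ∞)
    (p q : ℝ) (hp : 1 ≤ p) (hpq : p ≤ q) :
    lqNorm lam (intFn lam w p f) (ENNReal.ofReal q) ≤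
      (wNorm w) ^ ((q - p) / (q * p)) * (gNorm lam Delta w) ^ (1 / q) *
        lqNorm lam (fun x => ((‖f x‖₊ : ℝ≥0∞))) (ENNReal.ofReal q) := by
  classical
  have hq1 : 1 ≤ q := hp.trans hpq
  have hq0 : (0:ℝ) < q := lt_of_lt_of_le zero_lt_one hq1
  have hp0 : (0:ℝ) < p := lt_of_lt_of_le zero_lt_one hp
  have hqne : q ≠ 0 := ne_of_gt hq0
  have hpne : p ≠ 0 := ne_of_gt hp0
  -- basic distance facts
  have hdist : ∀ x y : G, dist (x⁻¹ * y) (1:G) = dist y x := by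
    intro x y
    have := hd x⁻¹ y x
    simpa using this
  have hball_pre : ∀ (x : G) (r : ℝ),
      Metric.ball x r = (fun y => x⁻¹ * y) ⁻¹' Metric.ball (1:G) r := by
    intro x r
    ext y
    simp [Metric.mem_ball, hdist]
  have hVeq : ∀ (x : G) (r : ℝ), lam (Metric.ball x r) = lam (Metric.ball (1:G) r) := by
    intro x r
    rw [hball_pre x r]
    exact measure_preimage_mul lam x⁻¹ _
  have hVfin : ∀ r : ℝ, lam (Metric.ball (1:G) r) ≠ ∞ := fun r => measure_ball_lt_top.ne
  have hVpos : ∀ r : ℝ, 0 < r → lam (Metric.ball (1:G) r) ≠ 0 :=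
    fun r hr => (measure_ball_pos lam 1 hr).ne'
  -- joint measurability of ballAvg
  have hAf_meas : Measurable (fun pr : G × ℝ => ballAvg lam f pr.1 pr.2) := by
    have hnum : Measurable fun pr : G × ℝ =>
        ∫⁻ y in Metric.ball pr.1 pr.2, (‖f y‖₊ : ℝ≥0∞) ∂lam := by
      have heq : ∀ pr : G × ℝ, (∫⁻ y in Metric.ball pr.1 pr.2, (‖f y‖₊ : ℝ≥0∞) ∂lam)
          = ∫⁻ y, (if dist y pr.1 < pr.2 then (‖f y‖₊ : ℝ≥0∞) else 0) ∂lam := by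
        intro pr
        rw [← lintegral_indicator measurableSet_ball]
        refine lintegral_congr fun y => ?_
        simp [Set.indicator_apply, Metric.mem_ball]
      simp only [heq]
      apply Measurable.lintegral_prod_right'
        (f := fun pz : (G × ℝ) × G => if dist pz.2 pz.1.1 < pz.1.2 then (‖f pz.2‖₊ : ℝ≥0∞) else 0)
      refine Measurable.ite ?_ ?_ measurable_const
      · exact (isOpen_lt ((continuous_snd.dist (continuous_fst.fst))) continuous_fst.snd).measurableSet
      · exact (hf_meas.comp measurable_snd).nnnorm.coe_nnreal_ennreal
    have hden : Measurable fun pr : G × ℝ => lam (Metric.ball pr.1 pr.2) := by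
      have : (fun pr : G × ℝ => lam (Metric.ball pr.1 pr.2))
          = (fun r : ℝ => lam (Metric.ball (1:G) r)) ∘ Prod.snd := by
        funext pr; exact hVeq pr.1 pr.2
      rw [this]
      exact (Monotone.measurable fun a b hab =>
        measure_mono (Metric.ball_subset_ball hab)).comp measurable_snd
    exact hnum.div hden
  -- the key identity: ∫_{B_r} Delta y⁻¹ = lam B_r
  have keyD : ∀ r : ℝ, 0 < r →
      (∫⁻ y in Metric.ball (1:G) r, Delta y⁻¹ ∂lam) = lam (Metric.ball (1:G) r) := by
    intro r hr
    set B₁ : Set G := Metric.ball (1:G) 1 with hB₁def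
    have hB₁ : MeasurableSet B₁ := measurableSet_ball
    have hV1fin : lam B₁ ≠ ∞ := hVfin 1
    have hV1pos : lam B₁ ≠ 0 := hVpos 1 one_pos
    have himg : ∀ y : G, (fun x => x * y⁻¹) '' B₁ = (fun x => x * y) ⁻¹' B₁ := by
      intro y
      ext z
      constructor
      · rintro ⟨a, ha, rfl⟩
        simpa [mul_assoc] using ha
      · intro hz
        exact ⟨z * y, hz, by simp [mul_assoc]⟩
    have step1 : ∀ y : G, Delta y⁻¹ * lam B₁ = lam ((fun x => x * y) ⁻¹' B₁) := by
      intro y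
      rw [← himg, hDelta y⁻¹ B₁ hB₁]
    have hmeas1 : AEMeasurable
        (Function.uncurry fun (y x : G) => B₁.indicator (fun _ => (1:ℝ≥0∞)) (x * y))
        ((lam.restrict (Metric.ball (1:G) r)).prod lam) := by
      refine Measurable.aemeasurable ?_
      exact (measurable_const.indicator hB₁).comp (measurable_snd.mul measurable_fst)
    have hmeas2 : AEMeasurable
        (Function.uncurry fun (x z : G) =>
          (Metric.ball (1:G) r).indicator (fun _ => (1:ℝ≥0∞)) (x⁻¹ * z) *
            B₁.indicator (fun _ => (1:ℝ≥0∞)) z)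
        (lam.prod lam) := by
      refine Measurable.aemeasurable ?_
      exact ((measurable_const.indicator measurableSet_ball).comp
        (measurable_fst.inv.mul measurable_snd)).mul
        ((measurable_const.indicator hB₁).comp measurable_snd)
    have hind_ne : ∀ (s : Set G) (z : G), s.indicator (fun _ => (1:ℝ≥0∞)) z ≠ ∞ := by
      intro s z
      by_cases h : z ∈ s <;> simp [h]
    have hcalc : (∫⁻ y in Metric.ball (1:G) r, Delta y⁻¹ ∂lam) * lam B₁
        = lam (Metric.ball (1:G) r) * lam B₁ := by
      calc (∫⁻ y in Metric.ball (1:G) r, Delta y⁻¹ ∂lam) * lam B₁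
          = ∫⁻ y in Metric.ball (1:G) r, Delta y⁻¹ * lam B₁ ∂lam :=
            (lintegral_mul_const' _ _ hV1fin).symm
        _ = ∫⁻ y in Metric.ball (1:G) r, ∫⁻ x, B₁.indicator (fun _ => (1:ℝ≥0∞)) (x * y) ∂lam ∂lam := by
            refine lintegral_congr fun y => ?_
            rw [step1 y, ← lintegral_indicator_one ((measurable_mul_const y) hB₁)]
            refine lintegral_congr fun x => ?_
            simp [Set.indicator_apply, Set.mem_preimage]
        _ = ∫⁻ x, ∫⁻ y in Metric.ball (1:G) r, B₁.indicator (fun _ => (1:ℝ≥0∞)) (x * y) ∂lam ∂lam :=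
            lintegral_lintegral_swap hmeas1
        _ = ∫⁻ x, ∫⁻ z, (Metric.ball (1:G) r).indicator (fun _ => (1:ℝ≥0∞)) (x⁻¹ * z) *
              B₁.indicator (fun _ => (1:ℝ≥0∞)) z ∂lam ∂lam := by
            refine lintegral_congr fun x => ?_
            rw [← lintegral_indicator measurableSet_ball]
            rw [← lintegral_mul_left_eq_self (μ := lam)
              (fun z => (Metric.ball (1:G) r).indicator (fun _ => (1:ℝ≥0∞)) (x⁻¹ * z) *
                B₁.indicator (fun _ => (1:ℝ≥0∞)) z) x]
            refine lintegral_congr fun y => ?_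
            simp only [inv_mul_cancel_left]
            by_cases h : y ∈ Metric.ball (1:G) r <;> simp [Set.indicator_apply, h]
        _ = ∫⁻ z, (∫⁻ x, (Metric.ball (1:G) r).indicator (fun _ => (1:ℝ≥0∞)) (x⁻¹ * z) ∂lam) *
              B₁.indicator (fun _ => (1:ℝ≥0∞)) z ∂lam := by
            rw [lintegral_lintegral_swap hmeas2]
            exact lintegral_congr fun z => lintegral_mul_const' _ _ (hind_ne _ _)
        _ = ∫⁻ z, lam (Metric.ball (1:G) r) * B₁.indicator (fun _ => (1:ℝ≥0∞)) z ∂lam := by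
            refine lintegral_congr fun z => ?_
            congr 1
            have hmem : ∀ x : G, (x⁻¹ * z ∈ Metric.ball (1:G) r) ↔ x ∈ Metric.ball z r := by
              intro x
              rw [Metric.mem_ball, Metric.mem_ball, hdist x z, dist_comm]
            calc ∫⁻ x, (Metric.ball (1:G) r).indicator (fun _ => (1:ℝ≥0∞)) (x⁻¹ * z) ∂lam
                = ∫⁻ x, (Metric.ball z r).indicator (fun _ => (1:ℝ≥0∞)) x ∂lam := by
                  refine lintegral_congr fun x => ?_
                  simp [Set.indicator_apply, hmem x]
              _ = lam (Metric.ball z r) := by rw [lintegral_indicator_const measurableSet_ball, one_mul]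
              _ = lam (Metric.ball (1:G) r) := hVeq z r
        _ = lam (Metric.ball (1:G) r) * lam B₁ := by
            rw [lintegral_const_mul' _ _ (hVfin r), lintegral_indicator_const hB₁, one_mul]
    -- cancel lam B₁
    have := congrArg (· * (lam B₁)⁻¹) hcalc
    simpa [mul_assoc, ENNReal.mul_inv_cancel hV1pos hV1fin] using this
  -- gNorm = wNorm
  have gNorm_eq : gNorm lam Delta w = wNorm w := by
    unfold gNorm wNorm
    refine setLIntegral_congr_fun measurableSet_Ioi (fun r hr => ?_)
    rw [keyD r hr, ENNReal.div_self (hVpos r hr) (hVfin r), mul_one]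
  -- L^q bound for the averaging operator at fixed radius
  have havgq : ∀ r : ℝ, 0 < r →
      (∫⁻ x, ballAvg lam f x r ^ q ∂lam) ≤ ∫⁻ x, ((‖f x‖₊ : ℝ≥0∞)) ^ q ∂lam := by
    intro r hr
    set Vr := lam (Metric.ball (1:G) r) with hVr
    have hV0 : Vr ≠ 0 := hVpos r hr
    have hVt : Vr ≠ ∞ := hVfin r
    have harith : ∀ X : ℝ≥0∞, Vr ^ (q-1) * X / Vr ^ q = X / Vr := by
      intro X
      have h1 : Vr ^ q ≠ 0 := by
        simp [ENNReal.rpow_eq_zero_iff, hV0, hVt]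
      have h2 : Vr ^ q ≠ ∞ := by
        simp [ENNReal.rpow_eq_top_iff, hV0, hVt]
      rw [ENNReal.rpow_sub _ _ hV0 hVt, ENNReal.rpow_one]
      rw [div_eq_mul_inv, div_eq_mul_inv, div_eq_mul_inv]
      calc Vr ^ q * Vr⁻¹ * X * (Vr ^ q)⁻¹ = Vr ^ q * (Vr ^ q)⁻¹ * (X * Vr⁻¹) := by ring
        _ = X * Vr⁻¹ := by rw [ENNReal.mul_inv_cancel h1 h2, one_mul]
    have hpoint : ∀ x : G, ballAvg lam f x r ^ q ≤
        (∫⁻ y in Metric.ball x r, ((‖f y‖₊ : ℝ≥0∞)) ^ q ∂lam) / Vr := by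
      intro x
      have hj := jensen_pow (lam.restrict (Metric.ball x r))
        (g := fun y => (‖f y‖₊ : ℝ≥0∞)) hf_meas.nnnorm.coe_nnreal_ennreal.aemeasurable hq1
      rw [Measure.restrict_apply_univ, hVeq x r] at hj
      unfold ballAvg
      rw [hVeq x r, ENNReal.div_rpow_of_nonneg _ _ (le_of_lt hq0)]
      calc (∫⁻ y in Metric.ball x r, (‖f y‖₊ : ℝ≥0∞) ∂lam) ^ q / Vr ^ q
          ≤ (Vr ^ (q-1) * ∫⁻ y in Metric.ball x r, ((‖f y‖₊ : ℝ≥0∞)) ^ q ∂lam) / Vr ^ q :=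
            ENNReal.div_le_div_right hj _
        _ = (∫⁻ y in Metric.ball x r, ((‖f y‖₊ : ℝ≥0∞)) ^ q ∂lam) / Vr := harith _
    have hswap : (∫⁻ x, ∫⁻ y in Metric.ball x r, ((‖f y‖₊ : ℝ≥0∞)) ^ q ∂lam ∂lam)
        = (∫⁻ y, ((‖f y‖₊ : ℝ≥0∞)) ^ q ∂lam) * Vr := by
      have hmeas : AEMeasurable
          (Function.uncurry fun (x y : G) =>
            (if dist y x < r then ((‖f y‖₊ : ℝ≥0∞)) ^ q else 0))
          (lam.prod lam) := by
        refine Measurable.aemeasurable ?_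
        refine Measurable.ite ?_ ?_ measurable_const
        · exact (isOpen_lt (continuous_snd.dist continuous_fst) continuous_const).measurableSet
        · exact (ENNReal.continuous_rpow_const.measurable).comp
            ((hf_meas.comp measurable_snd).nnnorm.coe_nnreal_ennreal)
      calc ∫⁻ x, ∫⁻ y in Metric.ball x r, ((‖f y‖₊ : ℝ≥0∞)) ^ q ∂lam ∂lam
          = ∫⁻ x, ∫⁻ y, (if dist y x < r then ((‖f y‖₊ : ℝ≥0∞)) ^ q else 0) ∂lam ∂lam := by
            refine lintegral_congr fun x => ?_
            rw [← lintegral_indicator measurableSet_ball]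
            refine lintegral_congr fun y => ?_
            simp [Set.indicator_apply, Metric.mem_ball]
        _ = ∫⁻ y, ∫⁻ x, (if dist y x < r then ((‖f y‖₊ : ℝ≥0∞)) ^ q else 0) ∂lam ∂lam :=
            lintegral_lintegral_swap hmeas
        _ = ∫⁻ y, ((‖f y‖₊ : ℝ≥0∞)) ^ q * Vr ∂lam := by
            refine lintegral_congr fun y => ?_
            have : ∀ x : G, (if dist y x < r then ((‖f y‖₊ : ℝ≥0∞)) ^ q else 0)
                = (Metric.ball y r).indicator (fun _ => ((‖f y‖₊ : ℝ≥0∞)) ^ q) x := by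
              intro x
              simp [Set.indicator_apply, Metric.mem_ball, dist_comm]
            simp only [this]
            rw [lintegral_indicator_const measurableSet_ball, hVeq y r, mul_comm]
        _ = (∫⁻ y, ((‖f y‖₊ : ℝ≥0∞)) ^ q ∂lam) * Vr :=
            lintegral_mul_const' _ _ hVt
    calc ∫⁻ x, ballAvg lam f x r ^ q ∂lam
        ≤ ∫⁻ x, (∫⁻ y in Metric.ball x r, ((‖f y‖₊ : ℝ≥0∞)) ^ q ∂lam) / Vr ∂lam :=
          lintegral_mono hpoint
      _ = (∫⁻ x, ∫⁻ y in Metric.ball x r, ((‖f y‖₊ : ℝ≥0∞)) ^ q ∂lam ∂lam) / Vr := by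
          simp only [div_eq_mul_inv]
          exact lintegral_mul_const' _ _ (by simpa using hV0)
      _ = (∫⁻ y, ((‖f y‖₊ : ℝ≥0∞)) ^ q ∂lam) * Vr / Vr := by rw [hswap]
      _ = ∫⁻ y, ((‖f y‖₊ : ℝ≥0∞)) ^ q ∂lam := by
          rw [div_eq_mul_inv, mul_assoc, ENNReal.mul_inv_cancel hV0 hVt, mul_one]
  -- pointwise Jensen in r : intFn p ≤ W^e * intFn q
  have hpoint : ∀ x : G, intFn lam w p f x ≤
      (wNorm w) ^ ((q - p) / (q * p)) * intFn lam w q f x := by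
    intro x
    set μw := (volume.restrict (Set.Ioi (0:ℝ))).withDensity (fun r => ENNReal.ofReal (w r))
      with hμwdef
    have hwmeas : Measurable fun r : ℝ => ENNReal.ofReal (w r) := hw_meas.ennreal_ofReal
    have hg_meas : Measurable fun r : ℝ => ballAvg lam f x r := by
      have heta : (fun r : ℝ => ballAvg lam f x r)
          = (fun pr : G × ℝ => ballAvg lam f pr.1 pr.2) ∘ (fun r : ℝ => (x, r)) := rfl
      rw [heta]
      exact hAf_meas.comp (measurable_const.prodMk measurable_id)
    have hμw_univ : μw univ = wNorm w := by
      rw [hμwdef, withDensity_apply _ MeasurableSet.univ, Measure.restrict_univ]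
      rfl
    have hconv : ∀ a : ℝ,
        (∫⁻ r in Set.Ioi (0:ℝ), ENNReal.ofReal (w r) * ballAvg lam f x r ^ a)
          = ∫⁻ r, ballAvg lam f x r ^ a ∂μw := by
      intro a
      have hga : Measurable fun r : ℝ => ballAvg lam f x r ^ a :=
        (ENNReal.continuous_rpow_const.measurable).comp hg_meas
      rw [hμwdef, lintegral_withDensity_eq_lintegral_mul _ hwmeas hga]
      rfl
    have hs1 : 1 ≤ q / p := (one_le_div hp0).mpr hpq
    have hj := jensen_root μw
      (g := fun r => ballAvg lam f x r ^ p)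
      ((ENNReal.continuous_rpow_const.measurable).comp hg_meas).aemeasurable hs1
    have hqp : ∀ r : ℝ, (ballAvg lam f x r ^ p) ^ (q / p) = ballAvg lam f x r ^ q := by
      intro r
      rw [← ENNReal.rpow_mul]
      congr 1
      field_simp
    simp only [hqp, hμw_univ] at hj
    have hj2 := ENNReal.rpow_le_rpow hj (by positivity : (0:ℝ) ≤ 1/p)
    rw [ENNReal.mul_rpow_of_nonneg _ _ (by positivity : (0:ℝ) ≤ 1/p),
      ← ENNReal.rpow_mul, ← ENNReal.rpow_mul] at hj2
    have e3 : (1 - 1/(q/p)) * (1/p) = (q - p) / (q * p) := by field_simp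
    have e4 : 1/(q/p) * (1/p) = 1/q := by field_simp
    rw [e3, e4] at hj2
    unfold intFn
    rw [hconv p, hconv q]
    exact hj2
  -- mass bound for intFn q
  have hK : (∫⁻ x, intFn lam w q f x ^ q ∂lam)
      ≤ wNorm w * ∫⁻ x, ((‖f x‖₊ : ℝ≥0∞)) ^ q ∂lam := by
    have hrw : ∀ x : G, intFn lam w q f x ^ q
        = ∫⁻ r in Set.Ioi (0:ℝ), ENNReal.ofReal (w r) * ballAvg lam f x r ^ q := by
      intro x
      unfold intFn
      rw [← ENNReal.rpow_mul, one_div, inv_mul_cancel₀ hqne, ENNReal.rpow_one]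
    have hjoint : AEMeasurable
        (Function.uncurry fun (x : G) (r : ℝ) =>
          ENNReal.ofReal (w r) * ballAvg lam f x r ^ q)
        (lam.prod (volume.restrict (Set.Ioi (0:ℝ)))) := by
      refine Measurable.aemeasurable ?_
      exact ((hw_meas.ennreal_ofReal).comp measurable_snd).mul
        ((ENNReal.continuous_rpow_const.measurable).comp hAf_meas)
    calc ∫⁻ x, intFn lam w q f x ^ q ∂lam
        = ∫⁻ x, ∫⁻ r in Set.Ioi (0:ℝ), ENNReal.ofReal (w r) * ballAvg lam f x r ^ q ∂volume ∂lam :=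
          lintegral_congr hrw
      _ = ∫⁻ r in Set.Ioi (0:ℝ), ∫⁻ x, ENNReal.ofReal (w r) * ballAvg lam f x r ^ q ∂lam ∂volume :=
          lintegral_lintegral_swap hjoint
      _ = ∫⁻ r in Set.Ioi (0:ℝ), ENNReal.ofReal (w r) * ∫⁻ x, ballAvg lam f x r ^ q ∂lam ∂volume :=
          lintegral_congr fun r => lintegral_const_mul' _ _ ENNReal.ofReal_ne_top
      _ ≤ ∫⁻ r in Set.Ioi (0:ℝ), ENNReal.ofReal (w r) *
            ∫⁻ x, ((‖f x‖₊ : ℝ≥0∞)) ^ q ∂lam ∂volume := by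
          refine lintegral_mono_ae ((ae_restrict_iff' measurableSet_Ioi).2
            (ae_of_all _ fun r hr => ?_))
          exact mul_le_mul_right (havgq r hr) _
      _ = wNorm w * ∫⁻ x, ((‖f x‖₊ : ℝ≥0∞)) ^ q ∂lam := by
          rw [lintegral_mul_const _ hw_meas.ennreal_ofReal]
          rfl
  -- assemble
  have hofq : (ENNReal.ofReal q).toReal = q := ENNReal.toReal_ofReal (le_of_lt hq0)
  have hlq : ∀ g : G → ℝ≥0∞, lqNorm lam g (ENNReal.ofReal q)
      = (∫⁻ x, g x ^ q ∂lam) ^ (1/q) := by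
    intro g
    rw [lqNorm, if_neg ENNReal.ofReal_ne_top, hofq]
  set W := wNorm w with hW
  set K := ∫⁻ x, ((‖f x‖₊ : ℝ≥0∞)) ^ q ∂lam with hKdef
  set e := (q - p) / (q * p) with he
  have he_nonneg : 0 ≤ e := by
    rw [he]
    apply div_nonneg (by linarith) (by positivity)
  have hWt : W ≠ ∞ := hw_fin.ne
  calc lqNorm lam (intFn lam w p f) (ENNReal.ofReal q)
      = (∫⁻ x, intFn lam w p f x ^ q ∂lam) ^ (1/q) := hlq _
    _ ≤ (∫⁻ x, (W ^ e * intFn lam w q f x) ^ q ∂lam) ^ (1/q) :=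
        ENNReal.rpow_le_rpow (lintegral_mono fun x =>
          ENNReal.rpow_le_rpow (hpoint x) (le_of_lt hq0)) (by positivity)
    _ = (W ^ (e * q) * ∫⁻ x, intFn lam w q f x ^ q ∂lam) ^ (1/q) := by
        congr 1
        calc ∫⁻ x, (W ^ e * intFn lam w q f x) ^ q ∂lam
            = ∫⁻ x, W ^ (e * q) * intFn lam w q f x ^ q ∂lam := by
              refine lintegral_congr fun x => ?_
              rw [ENNReal.mul_rpow_of_nonneg _ _ (le_of_lt hq0), ← ENNReal.rpow_mul]
          _ = W ^ (e * q) * ∫⁻ x, intFn lam w q f x ^ q ∂lam :=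
              lintegral_const_mul' _ _
                (ENNReal.rpow_ne_top_of_nonneg (by positivity) hWt)
    _ ≤ (W ^ (e * q) * (W * K)) ^ (1/q) :=
        ENNReal.rpow_le_rpow (mul_le_mul_right hK _) (by positivity)
    _ = W ^ e * (W ^ (1/q) * K ^ (1/q)) := by
        rw [ENNReal.mul_rpow_of_nonneg _ _ (by positivity : (0:ℝ) ≤ 1/q),
          ENNReal.mul_rpow_of_nonneg _ _ (by positivity : (0:ℝ) ≤ 1/q),
          ← ENNReal.rpow_mul]
        congr 2
        field_simp
    _ = W ^ e * (gNorm lam Delta w) ^ (1/q) *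
          lqNorm lam (fun x => ((‖f x‖₊ : ℝ≥0∞))) (ENNReal.ofReal q) := by
        rw [gNorm_eq, hlq]
        ring
end

section
/- Let G be a unimodular non-compact Lie group with left-invariant distance d and Haar measure λ, and let w be any radius-weight. Then for all 1 ≤ p ≤ q ≤ ∞ and all locally integrable f, ‖I_{p,w}f‖_{L^q(G)} ≤ ‖w‖^{1/p} ‖f‖_{L^q(G)}; in particular I_{p,w} is a bounded sublinear operator on L^q(G). -/
open MeasureTheory Metric Filter Set ENNReal

/-- Hölder/Jensen: `∫ g ≤ (∫ g^s)^{1/s} (μ univ)^{1-1/s}` for `s ≥ 1`. -/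
lemma aux_jensen {X : Type*} [MeasurableSpace X] (μ : Measure X)
    (g : X → ℝ≥0∞) (hg : AEMeasurable g μ) {s : ℝ} (hs : 1 ≤ s) :
    ∫⁻ x, g x ∂μ ≤ (∫⁻ x, g x ^ s ∂μ) ^ (1/s) * (μ univ) ^ (1 - 1/s) := by
  rcases eq_or_lt_of_le hs with h1 | h1
  · rw [← h1]; norm_num
  · have hs0 : s ≠ 0 := by linarith
    have hs1 : s - 1 ≠ 0 := by linarith
    have hconj : s.HolderConjugate (s/(s-1)) :=
      (Real.holderConjugate_iff_eq_conjExponent h1).mpr rfl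
    have h1d : 1/(s/(s-1)) = 1 - 1/s := by
      rw [one_div_div]; field_simp
    calc ∫⁻ x, g x ∂μ = ∫⁻ x, g x * 1 ∂μ := by simp
      _ ≤ (∫⁻ x, g x ^ s ∂μ) ^ (1/s) * (∫⁻ _x, (1:ℝ≥0∞) ^ (s/(s-1)) ∂μ) ^ (1/(s/(s-1))) :=
          ENNReal.lintegral_mul_le_Lp_mul_Lq μ hconj hg aemeasurable_const
      _ = (∫⁻ x, g x ^ s ∂μ) ^ (1/s) * (μ univ) ^ (1 - 1/s) := by
          rw [h1d]; simp [lintegral_one]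

theorem intFn_lq_bound_unimodular {G : Type*} [Group G] [MetricSpace G] [IsTopologicalGroup G]
    [MeasurableSpace G] [BorelSpace G] [LocallyCompactSpace G] [ProperSpace G]
    [NoncompactSpace G]
    (hd : ∀ g x y : G, dist (g * x) (g * y) = dist x y)
    (lam : Measure G) [lam.IsHaarMeasure] [lam.IsMulRightInvariant]
    (w : ℝ → ℝ) (hw_meas : Measurable w) (hw_nonneg : ∀ r, 0 ≤ w r)
    (hw_fin : wNorm w < ∞)
    (hw_ne : ∀ᵐ r ∂(volume.restrict (Set.Ioi (0 : ℝ))), w r ≠ 0)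
    (f : G → ℝ) (hf_meas : Measurable f)
    (hf_loc : ∀ s : Set G, Bornology.IsBounded s →
      (∫⁻ y in s, (‖f y‖₊ : ℝ≥0∞) ∂lam) < ∞)
    (p q : ℝ≥0∞) (hp : 1 ≤ p) (hpq : p ≤ q) :
    lqNorm lam (intFnE lam w p f) q ≤
      (wNorm w) ^ (p⁻¹.toReal) * lqNorm lam (fun x => ((‖f x‖₊ : ℝ≥0∞))) q := by
  classical
  -- the measure of any ball of radius r equals that of the ball at the identity
  have hball : ∀ (x : G) (r : ℝ), lam (ball x r) = lam (ball (1:G) r) := by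
    intro x r
    have hpre : (fun z => x * z) ⁻¹' (ball x r) = ball (1:G) r := by
      ext z
      simp only [mem_preimage, Metric.mem_ball]
      have : dist (x*z) x = dist z 1 := by
        calc dist (x*z) x = dist (x*z) (x*1) := by rw [mul_one]
          _ = dist z 1 := hd x z 1
      rw [this]
    rw [← hpre, measure_preimage_mul]
  -- pointwise bound of the average by an essential bound of |f|
  have havg : ∀ C : ℝ≥0∞, (∀ᵐ y ∂lam, (‖f y‖₊ : ℝ≥0∞) ≤ C) →
      ∀ (x : G) (r : ℝ), ballAvg lam f x r ≤ C := by
    intro C hC x r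
    refine ENNReal.div_le_of_le_mul ?_
    calc ∫⁻ y in ball x r, (‖f y‖₊ : ℝ≥0∞) ∂lam
        ≤ ∫⁻ _y in ball x r, C ∂lam := lintegral_mono_ae (ae_restrict_of_ae hC)
      _ = C * lam (ball x r) := setLIntegral_const _ _
  by_cases hq : q = ∞
  · -- essential supremum case
    subst hq
    have hCae := _root_.ae_le_essSup (f := fun x => (‖f x‖₊ : ℝ≥0∞)) (μ := lam)
    set C := essSup (fun x => (‖f x‖₊ : ℝ≥0∞)) lam with hCdef
    have hA := havg C hCae
    rw [show lqNorm lam (intFnE lam w p f) ∞ = essSup (intFnE lam w p f) lam from if_pos rfl,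
      show lqNorm lam (fun x => ((‖f x‖₊ : ℝ≥0∞))) ∞ = C from if_pos rfl]
    by_cases hpT : p = ∞
    · subst hpT
      rw [show intFnE lam w ∞ f = maximalFn lam f from funext fun x => if_pos rfl,
        show ((∞ : ℝ≥0∞)⁻¹).toReal = (0:ℝ) by simp, ENNReal.rpow_zero, one_mul]
      refine essSup_le_of_ae_le _ (Filter.Eventually.of_forall fun x => ?_)
      exact iSup_le fun r => iSup_le fun _ => hA x r
    · have hP1 : (1:ℝ) ≤ p.toReal := by
        rw [← ENNReal.toReal_one]
        exact ENNReal.toReal_mono hpT hp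
      have hP0 : (0:ℝ) < p.toReal := by linarith
      have hx : ∀ x, intFn lam w p.toReal f x ≤ (wNorm w) ^ (1/p.toReal) * C := by
        intro x
        have h1 : (∫⁻ r in Ioi (0:ℝ), ENNReal.ofReal (w r) * ballAvg lam f x r ^ p.toReal)
            ≤ wNorm w * C ^ p.toReal := by
          calc (∫⁻ r in Ioi (0:ℝ), ENNReal.ofReal (w r) * ballAvg lam f x r ^ p.toReal)
              ≤ ∫⁻ r in Ioi (0:ℝ), ENNReal.ofReal (w r) * C ^ p.toReal := by
                refine lintegral_mono fun r => ?_
                exact mul_le_mul_right (ENNReal.rpow_le_rpow (hA x r) hP0.le) _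
            _ = wNorm w * C ^ p.toReal := lintegral_mul_const _ hw_meas.ennreal_ofReal
        calc intFn lam w p.toReal f x
            ≤ (wNorm w * C ^ p.toReal) ^ (1/p.toReal) :=
              ENNReal.rpow_le_rpow h1 (by positivity)
          _ = (wNorm w) ^ (1/p.toReal) * C := by
              rw [ENNReal.mul_rpow_of_nonneg _ _ (by positivity), ← ENNReal.rpow_mul,
                mul_one_div_cancel hP0.ne', ENNReal.rpow_one]
      rw [show intFnE lam w p f = intFn lam w p.toReal f from funext fun x => if_neg hpT,
        ENNReal.toReal_inv, ← one_div]
      exact essSup_le_of_ae_le _ (Filter.Eventually.of_forall hx)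
  · -- q < ∞ case
    have hpT : p ≠ ∞ := fun h => hq (top_le_iff.mp (h ▸ hpq))
    have hP1 : (1:ℝ) ≤ p.toReal := by
      rw [← ENNReal.toReal_one]; exact ENNReal.toReal_mono hpT hp
    have hPQ : p.toReal ≤ q.toReal := ENNReal.toReal_mono hq hpq
    have hQ1 : (1:ℝ) ≤ q.toReal := hP1.trans hPQ
    have hP0 : (0:ℝ) < p.toReal := by linarith
    have hQ0 : (0:ℝ) < q.toReal := by linarith
    have hs1 : (1:ℝ) ≤ q.toReal / p.toReal := (one_le_div hP0).mpr hPQ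
    have hs0 : (0:ℝ) < q.toReal / p.toReal := by linarith
    have hWT : wNorm w ≠ ∞ := hw_fin.ne
    have hW0 : wNorm w ≠ 0 := by
      intro h0
      have hae : ∀ᵐ r ∂(volume.restrict (Ioi (0:ℝ))), ENNReal.ofReal (w r) = 0 :=
        (lintegral_eq_zero_iff hw_meas.ennreal_ofReal).mp h0
      have hfalse : ∀ᵐ r ∂(volume.restrict (Ioi (0:ℝ))), False := by
        filter_upwards [hae, hw_ne] with r h1 h2
        exact h2 (le_antisymm (by simpa [ENNReal.ofReal_eq_zero] using h1) (hw_nonneg r))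
      have hne : (volume.restrict (Ioi (0:ℝ))) ≠ 0 := by
        intro hcon
        have hv := Real.volume_Ioi (a := (0:ℝ))
        rw [← Measure.restrict_apply_univ, hcon] at hv
        simp at hv
      exact hne (ae_eq_bot.mp (Filter.eventually_false_iff_eq_bot.mp hfalse))
    -- the weighted measure on (0,∞)
    set ν : Measure ℝ := (volume.restrict (Ioi (0:ℝ))).withDensity
      (fun r => ENNReal.ofReal (w r)) with hνdef
    have hν_univ : ν univ = wNorm w := by
      rw [hνdef, withDensity_apply _ MeasurableSet.univ, setLIntegral_univ]
      rfl
    haveI : IsFiniteMeasure ν := ⟨by rw [hν_univ]; exact hw_fin⟩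
    have hνint : ∀ (g : ℝ → ℝ≥0∞), Measurable g →
        ∫⁻ a, g a ∂ν = ∫⁻ r in Ioi (0:ℝ), ENNReal.ofReal (w r) * g r := by
      intro g hg
      rw [hνdef, lintegral_withDensity_eq_lintegral_mul _ hw_meas.ennreal_ofReal hg]
      rfl
    have hν_ae : ∀ᵐ a ∂ν, a ∈ Ioi (0:ℝ) := by
      have habs : ν ≪ volume.restrict (Ioi (0:ℝ)) := by
        rw [hνdef]; exact withDensity_absolutelyContinuous _ _
      exact (ae_restrict_mem measurableSet_Ioi).filter_mono habs.ae_le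
    -- joint measurability of the averaging function
    have hc_meas : Measurable (fun r : ℝ => lam (ball (1:G) r)) :=
      Monotone.measurable (fun a b hab => measure_mono (ball_subset_ball hab))
    have hUopen : IsOpen {z : (G × ℝ) × G | dist z.2 z.1.1 < z.1.2} :=
      isOpen_lt (continuous_snd.dist (continuous_fst.comp continuous_fst))
        (continuous_snd.comp continuous_fst)
    have hnum_meas : Measurable (fun z : G × ℝ =>
        ∫⁻ y, Set.indicator {z : (G × ℝ) × G | dist z.2 z.1.1 < z.1.2}
          (fun q => (‖f q.2‖₊ : ℝ≥0∞)) (z, y) ∂lam) := by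
      apply Measurable.lintegral_prod_right
        (f := fun z y => Set.indicator {z : (G × ℝ) × G | dist z.2 z.1.1 < z.1.2}
          (fun q => (‖f q.2‖₊ : ℝ≥0∞)) (z, y))
      exact (hf_meas.comp measurable_snd).nnnorm.coe_nnreal_ennreal.indicator hUopen.measurableSet
    have hA_eq : ∀ (x : G) (r : ℝ), ballAvg lam f x r
        = (∫⁻ y, Set.indicator {z : (G × ℝ) × G | dist z.2 z.1.1 < z.1.2}
            (fun q => (‖f q.2‖₊ : ℝ≥0∞)) ((x, r), y) ∂lam) / lam (ball (1:G) r) := by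
      intro x r
      rw [ballAvg, hball]
      congr 1
      rw [← lintegral_indicator measurableSet_ball]
      congr 1
    have hA_meas : Measurable (fun z : G × ℝ => ballAvg lam f z.1 z.2) := by
      have heq : (fun z : G × ℝ => ballAvg lam f z.1 z.2)
          = fun z : G × ℝ => (∫⁻ y, Set.indicator {z : (G × ℝ) × G | dist z.2 z.1.1 < z.1.2}
              (fun q => (‖f q.2‖₊ : ℝ≥0∞)) (z, y) ∂lam) / lam (ball (1:G) z.2) :=
        funext fun z => hA_eq z.1 z.2
      rw [heq]
      exact hnum_meas.div (hc_meas.comp measurable_snd)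
    -- the key L^Q bound for the averaging operator, for fixed radius
    have hBall_bound : ∀ r : ℝ, 0 < r →
        (∫⁻ x, ballAvg lam f x r ^ q.toReal ∂lam)
          ≤ ∫⁻ x, (‖f x‖₊ : ℝ≥0∞) ^ q.toReal ∂lam := by
      intro r hr
      set c := lam (ball (1:G) r) with hc
      have hc0 : c ≠ 0 := (measure_ball_pos lam _ hr).ne'
      have hcT : c ≠ ∞ := measure_ball_lt_top.ne
      have hptw : ∀ x, ballAvg lam f x r ^ q.toReal
          ≤ (∫⁻ y in ball x r, (‖f y‖₊ : ℝ≥0∞) ^ q.toReal ∂lam) / c := by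
        intro x
        have hJ := aux_jensen (lam.restrict (ball x r)) (fun y => (‖f y‖₊ : ℝ≥0∞))
          hf_meas.nnnorm.coe_nnreal_ennreal.aemeasurable hQ1
        rw [Measure.restrict_apply_univ, hball, ← hc] at hJ
        have hkey : c ^ (1 - 1/q.toReal) = c ^ (-(1/q.toReal)) * c := by
          calc c ^ (1 - 1/q.toReal) = c ^ (-(1/q.toReal) + 1) := by rw [sub_eq_neg_add]
            _ = c ^ (-(1/q.toReal)) * c ^ (1:ℝ) := ENNReal.rpow_add _ _ hc0 hcT
            _ = c ^ (-(1/q.toReal)) * c := by rw [ENNReal.rpow_one]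
        have h2 : ballAvg lam f x r
            ≤ (∫⁻ y in ball x r, (‖f y‖₊ : ℝ≥0∞) ^ q.toReal ∂lam) ^ (1/q.toReal)
              * c ^ (-(1/q.toReal)) := by
          rw [ballAvg, hball, ← hc]
          refine ENNReal.div_le_of_le_mul ?_
          calc (∫⁻ y in ball x r, (‖f y‖₊ : ℝ≥0∞) ∂lam)
              ≤ (∫⁻ y in ball x r, (‖f y‖₊ : ℝ≥0∞) ^ q.toReal ∂lam) ^ (1/q.toReal)
                * c ^ (1 - 1/q.toReal) := hJ
            _ = (∫⁻ y in ball x r, (‖f y‖₊ : ℝ≥0∞) ^ q.toReal ∂lam) ^ (1/q.toReal)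
                * c ^ (-(1/q.toReal)) * c := by rw [hkey, mul_assoc]
        calc ballAvg lam f x r ^ q.toReal
            ≤ ((∫⁻ y in ball x r, (‖f y‖₊ : ℝ≥0∞) ^ q.toReal ∂lam) ^ (1/q.toReal)
              * c ^ (-(1/q.toReal))) ^ q.toReal := ENNReal.rpow_le_rpow h2 hQ0.le
          _ = (∫⁻ y in ball x r, (‖f y‖₊ : ℝ≥0∞) ^ q.toReal ∂lam) * c⁻¹ := by
              rw [ENNReal.mul_rpow_of_nonneg _ _ hQ0.le, ← ENNReal.rpow_mul,
                ← ENNReal.rpow_mul, one_div, inv_mul_cancel₀ hQ0.ne', neg_mul,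
                inv_mul_cancel₀ hQ0.ne', ENNReal.rpow_one, ENNReal.rpow_neg_one]
          _ = (∫⁻ y in ball x r, (‖f y‖₊ : ℝ≥0∞) ^ q.toReal ∂lam) / c :=
              (div_eq_mul_inv _ _).symm
      have h1 : ∀ x : G, (∫⁻ y in ball x r, (‖f y‖₊ : ℝ≥0∞) ^ q.toReal ∂lam)
          = ∫⁻ y, Set.indicator {z : G × G | dist z.2 z.1 < r}
              (fun z => (‖f z.2‖₊ : ℝ≥0∞) ^ q.toReal) (x, y) ∂lam := by
        intro x
        rw [← lintegral_indicator measurableSet_ball]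
        congr 1
      have h2 : ∀ y : G, (∫⁻ x, Set.indicator {z : G × G | dist z.2 z.1 < r}
              (fun z => (‖f z.2‖₊ : ℝ≥0∞) ^ q.toReal) (x, y) ∂lam)
          = (‖f y‖₊ : ℝ≥0∞) ^ q.toReal * c := by
        intro y
        have heq : ∀ x : G, Set.indicator {z : G × G | dist z.2 z.1 < r}
            (fun z => (‖f z.2‖₊ : ℝ≥0∞) ^ q.toReal) (x, y)
            = Set.indicator (ball y r) (fun _ => (‖f y‖₊ : ℝ≥0∞) ^ q.toReal) x := by
          intro x
          simp only [Set.indicator_apply, Set.mem_setOf_eq, Metric.mem_ball]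
          rw [dist_comm]
        simp_rw [heq]
        rw [lintegral_indicator measurableSet_ball, setLIntegral_const, hball, ← hc]
      have hFmeas : Measurable (fun z : G × G => Set.indicator {z : G × G | dist z.2 z.1 < r}
          (fun z => (‖f z.2‖₊ : ℝ≥0∞) ^ q.toReal) z) :=
        Measurable.indicator ((hf_meas.comp measurable_snd).nnnorm.coe_nnreal_ennreal.pow_const _)
          (isOpen_lt (continuous_snd.dist continuous_fst) continuous_const).measurableSet
      calc (∫⁻ x, ballAvg lam f x r ^ q.toReal ∂lam)
          ≤ ∫⁻ x, (∫⁻ y in ball x r, (‖f y‖₊ : ℝ≥0∞) ^ q.toReal ∂lam) / c ∂lam :=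
            lintegral_mono hptw
        _ = (∫⁻ x, ∫⁻ y in ball x r, (‖f y‖₊ : ℝ≥0∞) ^ q.toReal ∂lam ∂lam) * c⁻¹ := by
            simp_rw [div_eq_mul_inv]
            exact lintegral_mul_const' _ _ (ENNReal.inv_ne_top.mpr hc0)
        _ = (∫⁻ y, (‖f y‖₊ : ℝ≥0∞) ^ q.toReal * c ∂lam) * c⁻¹ := by
            congr 1
            calc (∫⁻ x, ∫⁻ y in ball x r, (‖f y‖₊ : ℝ≥0∞) ^ q.toReal ∂lam ∂lam)
                = ∫⁻ x, ∫⁻ y, Set.indicator {z : G × G | dist z.2 z.1 < r}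
                    (fun z => (‖f z.2‖₊ : ℝ≥0∞) ^ q.toReal) (x, y) ∂lam ∂lam := by
                  simp_rw [h1]
              _ = ∫⁻ y, ∫⁻ x, Set.indicator {z : G × G | dist z.2 z.1 < r}
                    (fun z => (‖f z.2‖₊ : ℝ≥0∞) ^ q.toReal) (x, y) ∂lam ∂lam :=
                  lintegral_lintegral_swap hFmeas.aemeasurable
              _ = ∫⁻ y, (‖f y‖₊ : ℝ≥0∞) ^ q.toReal * c ∂lam := by simp_rw [h2]
        _ = ∫⁻ y, (‖f y‖₊ : ℝ≥0∞) ^ q.toReal ∂lam := by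
            rw [lintegral_mul_const' _ _ hcT, mul_assoc, ENNReal.mul_inv_cancel hc0 hcT,
              mul_one]
    -- main estimate
    rw [show lqNorm lam (intFnE lam w p f) q
          = (∫⁻ x, intFnE lam w p f x ^ q.toReal ∂lam) ^ (1/q.toReal) from if_neg hq,
      show lqNorm lam (fun x => ((‖f x‖₊ : ℝ≥0∞))) q
          = (∫⁻ x, ((‖f x‖₊ : ℝ≥0∞)) ^ q.toReal ∂lam) ^ (1/q.toReal) from if_neg hq,
      show intFnE lam w p f = intFn lam w p.toReal f from funext fun x => if_neg hpT]
    have hT : ∀ x : G, intFn lam w p.toReal f x ^ q.toReal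
        ≤ wNorm w ^ (q.toReal / p.toReal - 1)
          * ∫⁻ a, ballAvg lam f x a ^ q.toReal ∂ν := by
      intro x
      have hgmeasP : Measurable fun a : ℝ => ballAvg lam f x a ^ p.toReal :=
        (hA_meas.comp (measurable_const.prodMk measurable_id)).pow_const _
      have hgmeasQ : Measurable fun a : ℝ => ballAvg lam f x a ^ q.toReal :=
        (hA_meas.comp (measurable_const.prodMk measurable_id)).pow_const _
      have hx1 : intFn lam w p.toReal f x ^ q.toReal
          = (∫⁻ a, ballAvg lam f x a ^ p.toReal ∂ν) ^ (q.toReal / p.toReal) := by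
        rw [intFn, ← ENNReal.rpow_mul, hνint _ hgmeasP]
        congr 1
        field_simp
      have hx2 := aux_jensen ν (fun a => ballAvg lam f x a ^ p.toReal)
        hgmeasP.aemeasurable hs1
      rw [hν_univ] at hx2
      have hx3 : (fun a => (ballAvg lam f x a ^ p.toReal) ^ (q.toReal / p.toReal))
          = fun a => ballAvg lam f x a ^ q.toReal := by
        funext a
        rw [← ENNReal.rpow_mul, mul_comm, div_mul_cancel₀ _ hP0.ne']
      rw [hx3] at hx2
      calc intFn lam w p.toReal f x ^ q.toReal
          = (∫⁻ a, ballAvg lam f x a ^ p.toReal ∂ν) ^ (q.toReal / p.toReal) := hx1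
        _ ≤ ((∫⁻ a, ballAvg lam f x a ^ q.toReal ∂ν) ^ (1/(q.toReal / p.toReal))
              * wNorm w ^ (1 - 1/(q.toReal / p.toReal))) ^ (q.toReal / p.toReal) :=
            ENNReal.rpow_le_rpow hx2 hs0.le
        _ = wNorm w ^ (q.toReal / p.toReal - 1)
              * ∫⁻ a, ballAvg lam f x a ^ q.toReal ∂ν := by
            rw [ENNReal.mul_rpow_of_nonneg _ _ hs0.le, ← ENNReal.rpow_mul,
              ← ENNReal.rpow_mul, one_div, inv_mul_cancel₀ hs0.ne', ENNReal.rpow_one]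
            have he : (1 - (q.toReal / p.toReal)⁻¹) * (q.toReal / p.toReal)
                = q.toReal / p.toReal - 1 := by
              field_simp
            rw [he, mul_comm]
    have key : (∫⁻ x, intFn lam w p.toReal f x ^ q.toReal ∂lam)
        ≤ wNorm w ^ (q.toReal / p.toReal) * ∫⁻ x, (‖f x‖₊ : ℝ≥0∞) ^ q.toReal ∂lam := by
      have hWpow : wNorm w ^ (q.toReal / p.toReal - 1) ≠ ∞ :=
        ENNReal.rpow_ne_top_of_nonneg (by linarith) hWT
      calc (∫⁻ x, intFn lam w p.toReal f x ^ q.toReal ∂lam)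
          ≤ ∫⁻ x, wNorm w ^ (q.toReal / p.toReal - 1)
              * ∫⁻ a, ballAvg lam f x a ^ q.toReal ∂ν ∂lam := lintegral_mono hT
        _ = wNorm w ^ (q.toReal / p.toReal - 1)
              * ∫⁻ x, ∫⁻ a, ballAvg lam f x a ^ q.toReal ∂ν ∂lam :=
            lintegral_const_mul' _ _ hWpow
        _ = wNorm w ^ (q.toReal / p.toReal - 1)
              * ∫⁻ a, ∫⁻ x, ballAvg lam f x a ^ q.toReal ∂lam ∂ν := by
            rw [lintegral_lintegral_swap (hA_meas.pow_const _).aemeasurable]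
        _ ≤ wNorm w ^ (q.toReal / p.toReal - 1)
              * ∫⁻ _a, (∫⁻ x, (‖f x‖₊ : ℝ≥0∞) ^ q.toReal ∂lam) ∂ν := by
            refine mul_le_mul_right (lintegral_mono_ae ?_) _
            filter_upwards [hν_ae] with a ha
            exact hBall_bound a ha
        _ = wNorm w ^ (q.toReal / p.toReal - 1)
              * ((∫⁻ x, (‖f x‖₊ : ℝ≥0∞) ^ q.toReal ∂lam) * wNorm w) := by
            rw [lintegral_const, hν_univ]
        _ = wNorm w ^ (q.toReal / p.toReal) * ∫⁻ x, (‖f x‖₊ : ℝ≥0∞) ^ q.toReal ∂lam := by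
            have hWs : wNorm w ^ (q.toReal / p.toReal)
                = wNorm w ^ (q.toReal / p.toReal - 1) * wNorm w := by
              calc wNorm w ^ (q.toReal / p.toReal)
                  = wNorm w ^ ((q.toReal / p.toReal - 1) + 1) := by rw [sub_add_cancel]
                _ = wNorm w ^ (q.toReal / p.toReal - 1) * wNorm w ^ (1:ℝ) :=
                    ENNReal.rpow_add _ _ hW0 hWT
                _ = wNorm w ^ (q.toReal / p.toReal - 1) * wNorm w := by
                    rw [ENNReal.rpow_one]
            rw [hWs]; ring
    calc (∫⁻ x, intFn lam w p.toReal f x ^ q.toReal ∂lam) ^ (1/q.toReal)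
        ≤ (wNorm w ^ (q.toReal / p.toReal)
            * ∫⁻ x, (‖f x‖₊ : ℝ≥0∞) ^ q.toReal ∂lam) ^ (1/q.toReal) :=
          ENNReal.rpow_le_rpow key (by positivity)
      _ = wNorm w ^ (p⁻¹.toReal)
            * (∫⁻ x, (‖f x‖₊ : ℝ≥0∞) ^ q.toReal ∂lam) ^ (1/q.toReal) := by
          rw [ENNReal.mul_rpow_of_nonneg _ _ (by positivity), ← ENNReal.rpow_mul,
            ENNReal.toReal_inv]
          congr 2
          field_simp
end

section
/- Let G be a non-compact Lie group with a left-invariant distance d and a right Haar measure ρ (so ρ(xB) = Δ(x^{-1})ρ(B) for the modular function Δ). Then for every locally integrable f, every r > 0 and every p ∈ [1,∞], ‖Af(·,r)‖_{L^p(G,ρ)} ≤ ‖f‖_{L^p(G,ρ)}, where Af(x,r) = (1/ρ(B(x,r))) ∫_{B(x,r)} |f| dρ and B(x,r) = x B(e,r). -/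
open MeasureTheory Metric Filter Set ENNReal

/-- Jensen-type inequality via Hölder: for `pt ≥ 1`,
`(∫⁻ φ dμ)^pt ≤ (∫⁻ φ^pt dμ) * (μ univ)^(pt-1)`. -/
lemma jensen_aux {X : Type*} [MeasurableSpace X] (μ : Measure X)
    {φ : X → ℝ≥0∞} (hφ : AEMeasurable φ μ) {pt : ℝ} (hpt : 1 ≤ pt) :
    (∫⁻ z, φ z ∂μ) ^ pt ≤ (∫⁻ z, φ z ^ pt ∂μ) * (μ Set.univ) ^ (pt - 1) := by
  rcases eq_or_lt_of_le hpt with h1 | h1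
  · simp [← h1]
  · set q : ℝ := Real.conjExponent pt
    have hpq : Real.HolderConjugate pt q := Real.HolderConjugate.conjExponent h1
    have holder : ∫⁻ z, φ z * 1 ∂μ ≤
        (∫⁻ z, φ z ^ pt ∂μ) ^ (1 / pt) * (∫⁻ z, (1 : ℝ≥0∞) ^ q ∂μ) ^ (1 / q) :=
      ENNReal.lintegral_mul_le_Lp_mul_Lq μ hpq hφ aemeasurable_const
    have h1q : ∫⁻ z, (1 : ℝ≥0∞) ^ q ∂μ = μ Set.univ := by simp
    have hI : ∫⁻ z, φ z ∂μ ≤ (∫⁻ z, φ z ^ pt ∂μ) ^ (1 / pt) * (μ Set.univ) ^ (1 / q) := by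
      simpa [h1q] using holder
    have hpt0 : (0:ℝ) ≤ pt := by linarith
    have hptne : pt ≠ 0 := by linarith
    calc (∫⁻ z, φ z ∂μ) ^ pt
        ≤ ((∫⁻ z, φ z ^ pt ∂μ) ^ (1 / pt) * (μ Set.univ) ^ (1 / q)) ^ pt :=
          ENNReal.rpow_le_rpow hI hpt0
      _ = (∫⁻ z, φ z ^ pt ∂μ) * (μ Set.univ) ^ (pt - 1) := by
          rw [ENNReal.mul_rpow_of_nonneg _ _ hpt0, ← ENNReal.rpow_mul, ← ENNReal.rpow_mul,
            one_div_mul_cancel hptne, ENNReal.rpow_one]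
          congr 1
          have h2 : pt - 1 ≠ 0 := by linarith
          have hq : q = pt / (pt - 1) := rfl
          have : 1 / q * pt = pt - 1 := by
            rw [hq]
            field_simp
          rw [this]


theorem avg_lp_bound_right_haar {G : Type*} [Group G] [MetricSpace G] [IsTopologicalGroup G]
    [MeasurableSpace G] [BorelSpace G] [LocallyCompactSpace G] [ProperSpace G]
    [NoncompactSpace G]
    (hd : ∀ g x y : G, dist (g * x) (g * y) = dist x y)
    (rho : Measure G) [IsFiniteMeasureOnCompacts rho] [rho.IsOpenPosMeasure]
    [rho.IsMulRightInvariant]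
    (Delta : G → ℝ≥0∞)
    (hDelta : ∀ (x : G) (s : Set G), MeasurableSet s →
      rho ((fun y => x * y) '' s) = Delta x⁻¹ * rho s)
    (f : G → ℝ) (hf_meas : Measurable f)
    (hf_loc : ∀ s : Set G, Bornology.IsBounded s →
      (∫⁻ y in s, (‖f y‖₊ : ℝ≥0∞) ∂rho) < ∞)
    (r : ℝ) (hr : 0 < r) (p : ℝ≥0∞) (hp : 1 ≤ p) :
    lqNorm rho (fun x => ballAvg rho f x r) p ≤
      lqNorm rho (fun x => ((‖f x‖₊ : ℝ≥0∞))) p := by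
  classical
  set B : Set G := Metric.ball (1 : G) r with hBdef
  have hBmeas : MeasurableSet B := measurableSet_ball
  set g : G → ℝ≥0∞ := fun y => (‖f y‖₊ : ℝ≥0∞) with hgdef
  have hgmeas : Measurable g := hf_meas.nnnorm.coe_nnreal_ennreal
  -- membership characterization
  have hmem : ∀ x y : G, y ∈ Metric.ball x r ↔ x⁻¹ * y ∈ B := by
    intro x y
    have hdist : dist (x⁻¹ * y) (1 : G) = dist y x := by
      have := hd x (x⁻¹ * y) 1
      simpa [mul_inv_cancel_left] using this.symm
    simp [hBdef, Metric.mem_ball, hdist]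
  have hball : ∀ x : G, Metric.ball x r = (fun z => x * z) '' B := by
    intro x
    ext y
    rw [hmem x y]
    constructor
    · intro h; exact ⟨x⁻¹ * y, h, by group⟩
    · rintro ⟨z, hz, rfl⟩; simpa [inv_mul_cancel_left] using hz
  have hrho_ball : ∀ x : G, rho (Metric.ball x r) = Delta x⁻¹ * rho B := by
    intro x; rw [hball x]; exact hDelta x B hBmeas
  set c : ℝ≥0∞ := rho B with hcdef
  have hc0 : c ≠ 0 := (measure_ball_pos rho (1 : G) hr).ne'
  have hctop : c ≠ ∞ := measure_ball_lt_top.ne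
  have hD0 : ∀ x : G, Delta x⁻¹ ≠ 0 := by
    intro x
    intro h
    have := hrho_ball x
    rw [h, zero_mul] at this
    exact (measure_ball_pos rho x hr).ne' this
  have hDtop : ∀ x : G, Delta x⁻¹ ≠ ∞ := by
    intro x
    intro h
    have h2 := hrho_ball x
    rw [h, ENNReal.top_mul hc0] at h2
    exact measure_ball_lt_top.ne h2
  -- change of variables
  have hmap : ∀ x : G, Measure.map (fun y => x⁻¹ * y) rho = (Delta x⁻¹) • rho := by
    intro x
    ext s hs
    rw [Measure.map_apply (measurable_const_mul _) hs]
    have himg : (fun y => x⁻¹ * y) ⁻¹' s = (fun y => x * y) '' s := by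
      ext y
      constructor
      · intro h; exact ⟨x⁻¹ * y, h, by group⟩
      · rintro ⟨z, hz, rfl⟩; simpa [inv_mul_cancel_left] using hz
    rw [himg, hDelta x s hs, Measure.smul_apply, smul_eq_mul]
  have hcov : ∀ (x : G) (h : G → ℝ≥0∞), Measurable h →
      ∫⁻ y in Metric.ball x r, h y ∂rho = Delta x⁻¹ * ∫⁻ z in B, h (x * z) ∂rho := by
    intro x h hh
    have hHmeas : Measurable (B.indicator fun z => h (x * z)) :=
      (hh.comp (measurable_const_mul x)).indicator hBmeas
    calc ∫⁻ y in Metric.ball x r, h y ∂rho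
        = ∫⁻ y, (Metric.ball x r).indicator h y ∂rho :=
          (lintegral_indicator measurableSet_ball h).symm
      _ = ∫⁻ y, B.indicator (fun z => h (x * z)) (x⁻¹ * y) ∂rho := by
          congr 1; ext y
          by_cases hy : y ∈ Metric.ball x r
          · have hy' : x⁻¹ * y ∈ B := (hmem x y).1 hy
            rw [Set.indicator_of_mem hy, Set.indicator_of_mem hy']
            congr 1
            group
          · have hy' : x⁻¹ * y ∉ B := fun hmem' => hy ((hmem x y).2 hmem')
            rw [Set.indicator_of_notMem hy, Set.indicator_of_notMem hy']
      _ = ∫⁻ z, B.indicator (fun z => h (x * z)) z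
            ∂(Measure.map (fun y => x⁻¹ * y) rho) :=
          (lintegral_map hHmeas (measurable_const_mul _)).symm
      _ = Delta x⁻¹ * ∫⁻ z in B, h (x * z) ∂rho := by
          rw [hmap x, lintegral_smul_measure, lintegral_indicator hBmeas, smul_eq_mul]
  have hAvg : ∀ x : G, ballAvg rho f x r = (∫⁻ z in B, g (x * z) ∂rho) / c := by
    intro x
    rw [ballAvg, hcov x g hgmeas, hrho_ball x,
      ENNReal.mul_div_mul_left _ _ (hD0 x) (hDtop x)]
  by_cases hptop : p = ∞
  · -- p = ∞ : essential supremum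
    subst hptop
    simp only [lqNorm, if_pos rfl]
    have hbound : ∀ x : G, ballAvg rho f x r ≤ essSup g rho := by
      intro x
      rw [ballAvg]
      refine ENNReal.div_le_of_le_mul ?_
      calc ∫⁻ y in Metric.ball x r, g y ∂rho
          ≤ ∫⁻ _ in Metric.ball x r, essSup g rho ∂rho :=
            lintegral_mono_ae (ae_restrict_of_ae (ENNReal.ae_le_essSup g))
        _ = essSup g rho * rho (Metric.ball x r) := setLIntegral_const _ _
    exact essSup_le_of_ae_le _ (Filter.Eventually.of_forall hbound)
  · -- p finite
    have hpt1 : 1 ≤ p.toReal := by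
      have := ENNReal.toReal_mono hptop hp
      simpa using this
    set pt : ℝ := p.toReal with hptdef
    have hpt0 : (0:ℝ) < pt := lt_of_lt_of_le one_pos hpt1
    simp only [lqNorm, if_neg hptop]
    refine ENNReal.rpow_le_rpow ?_ (by positivity)
    -- key integral inequality
    have jensen : ∀ x : G, (ballAvg rho f x r) ^ pt ≤
        (∫⁻ z in B, g (x * z) ^ pt ∂rho) / c := by
      intro x
      rw [hAvg x, ENNReal.div_rpow_of_nonneg _ _ hpt0.le]
      have hJ := jensen_aux (rho.restrict B)
        (φ := fun z => g (x * z))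
        ((hgmeas.comp (measurable_const_mul x)).aemeasurable) hpt1
      rw [Measure.restrict_apply_univ] at hJ
      calc (∫⁻ z in B, g (x * z) ∂rho) ^ pt / c ^ pt
          ≤ (∫⁻ z in B, g (x * z) ^ pt ∂rho) * c ^ (pt - 1) / c ^ pt :=
            ENNReal.div_le_div_right hJ _
        _ = (∫⁻ z in B, g (x * z) ^ pt ∂rho) / c := by
            have hcpow : c ^ pt = c ^ (pt - 1) * c := by
              have h := ENNReal.rpow_add (pt - 1) 1 hc0 hctop
              rw [ENNReal.rpow_one, sub_add_cancel] at h
              exact h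
            rw [hcpow, mul_comm (∫⁻ z in B, g (x * z) ^ pt ∂rho),
              ENNReal.mul_div_mul_left _ _
                (ENNReal.rpow_pos (pos_iff_ne_zero.mpr hc0) hctop).ne'
                (ENNReal.rpow_ne_top_of_nonneg (by linarith) hctop)]
    calc ∫⁻ x, ballAvg rho f x r ^ pt ∂rho
        ≤ ∫⁻ x, (∫⁻ z in B, g (x * z) ^ pt ∂rho) / c ∂rho := lintegral_mono jensen
      _ = (∫⁻ x, ∫⁻ z in B, g (x * z) ^ pt ∂rho ∂rho) / c := by
          simp_rw [div_eq_mul_inv]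
          exact lintegral_mul_const' c⁻¹ _ (by simpa using hc0)
      _ = (∫⁻ z in B, ∫⁻ x, g (x * z) ^ pt ∂rho ∂rho) / c := by
          congr 1
          refine lintegral_lintegral_swap ?_
          have : Measurable fun q : G × G => g (q.1 * q.2) ^ pt :=
            (hgmeas.comp measurable_mul).pow_const _
          exact this.aemeasurable
      _ = (∫⁻ z in B, (∫⁻ x, g x ^ pt ∂rho) ∂rho) / c := by
          congr 1
          refine setLIntegral_congr_fun hBmeas (fun z _ => ?_)
          exact lintegral_mul_right_eq_self (fun x => g x ^ pt) z
      _ = ((∫⁻ x, g x ^ pt ∂rho) * c) / c := by rw [setLIntegral_const]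
      _ = ∫⁻ x, g x ^ pt ∂rho := by
          rw [mul_div_assoc, ENNReal.div_self hc0 hctop, mul_one]
end

section
/- Let G be a non-compact Lie group with left-invariant distance d and right Haar measure ρ, and let w be any radius-weight. Then for all 1 ≤ p ≤ q ≤ ∞ and all locally integrable f, ‖I_{p,w}f‖_{L^q(G,ρ)} ≤ ‖w‖^{1/p} ‖f‖_{L^q(G,ρ)}. -/
open MeasureTheory Metric Filter Set ENNReal

lemma jensen_rpow_aux {X : Type*} [MeasurableSpace X] (μ : Measure X) (g : X → ℝ≥0∞)
    (hg : AEMeasurable g μ) {s : ℝ} (hs : 1 ≤ s) :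
    (∫⁻ x, g x ∂μ) ^ s ≤ (∫⁻ x, g x ^ s ∂μ) * (μ Set.univ) ^ (s - 1) := by
  rcases eq_or_lt_of_le hs with h1 | h1
  · simp [← h1]
  have hs0 : (0:ℝ) < s := lt_trans one_pos h1
  have hconj := Real.HolderConjugate.conjExponent h1
  have H := ENNReal.lintegral_mul_le_Lp_mul_Lq μ hconj hg (aemeasurable_const (b := (1:ℝ≥0∞)))
  simp only [Pi.mul_apply, mul_one, ENNReal.one_rpow, lintegral_one] at H
  have H2 := ENNReal.rpow_le_rpow H hs0.le
  refine le_trans H2 (le_of_eq ?_)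
  rw [ENNReal.mul_rpow_of_nonneg _ _ hs0.le, ← ENNReal.rpow_mul, ← ENNReal.rpow_mul,
    one_div_mul_cancel hs0.ne', ENNReal.rpow_one]
  congr 1
  rw [Real.conjExponent, one_div_div, div_mul_cancel₀ _ hs0.ne']

lemma ballAvg_measurable {G : Type*} [MetricSpace G] [MeasurableSpace G]
    [OpensMeasurableSpace G] [SecondCountableTopology G] (rho : Measure G) [SFinite rho]
    (f : G → ℝ) (hf : Measurable f) :
    Measurable (fun xr : G × ℝ => ballAvg rho f xr.1 xr.2) := by
  have hS : MeasurableSet {p : (G × ℝ) × G | dist p.2 p.1.1 < p.1.2} := by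
    apply measurableSet_lt
    · exact measurable_dist.comp (measurable_snd.prodMk (measurable_fst.comp measurable_fst))
    · exact measurable_snd.comp measurable_fst
  have hind : ∀ (g : G → ℝ≥0∞) (xr : G × ℝ) (y : G),
      {p : (G × ℝ) × G | dist p.2 p.1.1 < p.1.2}.indicator (fun p => g p.2) (xr, y)
        = (Metric.ball xr.1 xr.2).indicator g y := by
    intro g xr y
    by_cases h : y ∈ Metric.ball xr.1 xr.2
    · rw [Set.indicator_of_mem h, Set.indicator_of_mem (by simpa [Metric.mem_ball] using h)]
    · rw [Set.indicator_of_notMem h, Set.indicator_of_notMem (by simpa [Metric.mem_ball] using h)]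
  have hnum : Measurable fun xr : G × ℝ =>
      ∫⁻ y in Metric.ball xr.1 xr.2, (‖f y‖₊ : ℝ≥0∞) ∂rho := by
    have hm := (Measurable.indicator ((hf.comp measurable_snd).enorm) hS).lintegral_prod_right' (ν := rho)
    have heq : (fun xr : G × ℝ => ∫⁻ y in Metric.ball xr.1 xr.2, (‖f y‖₊ : ℝ≥0∞) ∂rho)
        = fun xr : G × ℝ => ∫⁻ y, {p : (G × ℝ) × G | dist p.2 p.1.1 < p.1.2}.indicator
            (fun p => (‖f p.2‖₊ : ℝ≥0∞)) (xr, y) ∂rho := by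
      funext xr
      rw [← lintegral_indicator measurableSet_ball _]
      exact lintegral_congr fun y => (hind _ xr y).symm
    rw [heq]; exact hm
  have hden : Measurable fun xr : G × ℝ => rho (Metric.ball xr.1 xr.2) := by
    have hm := (Measurable.indicator (measurable_const (a := (1:ℝ≥0∞))) hS).lintegral_prod_right' (ν := rho)
    have heq : (fun xr : G × ℝ => rho (Metric.ball xr.1 xr.2))
        = fun xr : G × ℝ => ∫⁻ y, {p : (G × ℝ) × G | dist p.2 p.1.1 < p.1.2}.indicator
            (fun _ => (1 : ℝ≥0∞)) (xr, y) ∂rho := by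
      funext xr
      rw [← setLIntegral_one, ← lintegral_indicator measurableSet_ball _]
      exact lintegral_congr fun y => (hind (fun _ => 1) xr y).symm
    rw [heq]; exact hm
  exact hnum.div hden

lemma avg_pow_lq {G : Type*} [Group G] [MetricSpace G] [IsTopologicalGroup G]
    [MeasurableSpace G] [BorelSpace G] [ProperSpace G]
    (hd : ∀ g x y : G, dist (g * x) (g * y) = dist x y)
    (rho : Measure G) [IsFiniteMeasureOnCompacts rho] [rho.IsOpenPosMeasure]
    [rho.IsMulRightInvariant]
    (Delta : G → ℝ≥0∞)
    (hDelta : ∀ (x : G) (s : Set G), MeasurableSet s →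
      rho ((fun y => x * y) '' s) = Delta x⁻¹ * rho s)
    (f : G → ℝ) (hf_meas : Measurable f)
    {qR : ℝ} (hq : 1 ≤ qR) (r : ℝ) :
    ∫⁻ x, (ballAvg rho f x r) ^ qR ∂rho ≤ ∫⁻ x, ((‖f x‖₊ : ℝ≥0∞)) ^ qR ∂rho := by
  have hq0 : (0:ℝ) < qR := lt_of_lt_of_le one_pos hq
  rcases le_or_gt r 0 with hr | hr
  · have hz : ∀ x : G, ballAvg rho f x r = 0 := by
      intro x
      unfold ballAvg
      rw [ball_eq_empty.2 hr]
      simp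
    calc ∫⁻ x, (ballAvg rho f x r) ^ qR ∂rho = 0 := by
          simp [hz, ENNReal.zero_rpow_of_pos hq0]
      _ ≤ _ := zero_le
  have hmul : ∀ x : G, Measurable fun y => x * y := fun x => measurable_const_mul x
  have hmap : ∀ x : G, Measure.map (fun y => x * y) rho = Delta x • rho := by
    intro x
    ext s hs
    have hset : (fun y => x * y) ⁻¹' s = (fun y => x⁻¹ * y) '' s := by
      ext y
      constructor
      · intro h
        exact ⟨x * y, h, inv_mul_cancel_left x y⟩
      · rintro ⟨a, ha, rfl⟩
        simpa [mul_inv_cancel_left] using ha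
    rw [Measure.map_apply (hmul x) hs, Measure.smul_apply, smul_eq_mul, hset,
      hDelta x⁻¹ s hs, inv_inv]
  have key : ∀ (x : G) (g : G → ℝ≥0∞), Measurable g →
      Delta x * ∫⁻ y, g y ∂rho = ∫⁻ z, g (x * z) ∂rho := by
    intro x g hg
    rw [← lintegral_map hg (hmul x), hmap x, lintegral_smul_measure, smul_eq_mul]
  have hball : ∀ x z : G, x * z ∈ ball x r ↔ z ∈ ball (1:G) r := by
    intro x z
    have h1 : dist (x * z) x = dist z 1 := by
      have := hd x z 1
      rwa [mul_one] at this
    simp [mem_ball, h1]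
  have hrhoB0 : rho (ball (1:G) r) ≠ 0 := (measure_ball_pos rho 1 hr).ne'
  have hrhoBt : rho (ball (1:G) r) ≠ ∞ := measure_ball_lt_top.ne
  have hind : ∀ (x : G) (g : G → ℝ≥0∞) (z : G),
      (ball x r).indicator g (x * z) = (ball (1:G) r).indicator (fun z => g (x * z)) z := by
    intro x g z
    by_cases h : z ∈ ball (1:G) r
    · rw [Set.indicator_of_mem ((hball x z).2 h), Set.indicator_of_mem h]
    · rw [Set.indicator_of_notMem (fun hc => h ((hball x z).1 hc)),
        Set.indicator_of_notMem h]
  have hDen : ∀ x : G, Delta x * rho (ball x r) = rho (ball (1:G) r) := by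
    intro x
    have h1 := key x ((ball x r).indicator fun _ => (1:ℝ≥0∞))
      (measurable_const.indicator measurableSet_ball)
    rw [lintegral_indicator measurableSet_ball, setLIntegral_one] at h1
    rw [h1]
    calc ∫⁻ z, (ball x r).indicator (fun _ => (1:ℝ≥0∞)) (x * z) ∂rho
        = ∫⁻ z, (ball (1:G) r).indicator (fun _ => (1:ℝ≥0∞)) z ∂rho :=
          lintegral_congr fun z => hind x _ z
      _ = rho (ball (1:G) r) := by
          rw [lintegral_indicator measurableSet_ball, setLIntegral_one]
  have hNum : ∀ x : G, Delta x * (∫⁻ y in ball x r, (‖f y‖₊ : ℝ≥0∞) ∂rho)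
      = ∫⁻ z in ball (1:G) r, (‖f (x * z)‖₊ : ℝ≥0∞) ∂rho := by
    intro x
    have h1 := key x ((ball x r).indicator fun y => (‖f y‖₊ : ℝ≥0∞))
      (hf_meas.enorm.indicator measurableSet_ball)
    rw [lintegral_indicator measurableSet_ball] at h1
    rw [h1]
    calc ∫⁻ z, (ball x r).indicator (fun y => (‖f y‖₊ : ℝ≥0∞)) (x * z) ∂rho
        = ∫⁻ z, (ball (1:G) r).indicator (fun z => (‖f (x * z)‖₊ : ℝ≥0∞)) z ∂rho :=
          lintegral_congr fun z => hind x _ z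
      _ = _ := lintegral_indicator measurableSet_ball _
  have hDpos : ∀ x : G, Delta x ≠ 0 ∧ Delta x ≠ ∞ := by
    intro x
    have hbx0 : rho (ball x r) ≠ 0 := (measure_ball_pos rho x hr).ne'
    have hbxt : rho (ball x r) ≠ ∞ := measure_ball_lt_top.ne
    have h1 := hDen x
    constructor
    · intro h
      rw [h, zero_mul] at h1
      exact hrhoB0 h1.symm
    · intro h
      rw [h, ENNReal.top_mul hbx0] at h1
      exact hrhoBt h1.symm
  have hAvg : ∀ x : G, ballAvg rho f x r
      = (∫⁻ z in ball (1:G) r, (‖f (x * z)‖₊ : ℝ≥0∞) ∂rho) / rho (ball (1:G) r) := by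
    intro x
    unfold ballAvg
    rw [← ENNReal.mul_div_mul_left (∫⁻ y in ball x r, (‖f y‖₊ : ℝ≥0∞) ∂rho)
      (rho (ball x r)) (hDpos x).1 (hDpos x).2 (c := Delta x), hNum x, hDen x]
  have hpt : ∀ x : G, (ballAvg rho f x r) ^ qR
      ≤ (∫⁻ z in ball (1:G) r, ((‖f (x * z)‖₊ : ℝ≥0∞)) ^ qR ∂rho) / rho (ball (1:G) r) := by
    intro x
    rw [hAvg x, ENNReal.div_rpow_of_nonneg _ _ hq0.le]
    have hJ := jensen_rpow_aux (rho.restrict (ball (1:G) r))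
      (fun z => (‖f (x * z)‖₊ : ℝ≥0∞))
      ((hf_meas.comp (measurable_const_mul x)).enorm.aemeasurable) hq
    rw [Measure.restrict_apply_univ] at hJ
    calc (∫⁻ z in ball (1:G) r, (‖f (x * z)‖₊ : ℝ≥0∞) ∂rho) ^ qR / rho (ball (1:G) r) ^ qR
        ≤ ((∫⁻ z in ball (1:G) r, ((‖f (x * z)‖₊ : ℝ≥0∞)) ^ qR ∂rho)
            * rho (ball (1:G) r) ^ (qR - 1)) / rho (ball (1:G) r) ^ qR :=
          ENNReal.div_le_div_right hJ _
      _ = (∫⁻ z in ball (1:G) r, ((‖f (x * z)‖₊ : ℝ≥0∞)) ^ qR ∂rho) / rho (ball (1:G) r) := by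
          rw [mul_div_assoc, ← ENNReal.rpow_sub _ _ hrhoB0 hrhoBt,
            show qR - 1 - qR = (-1:ℝ) by ring, ENNReal.rpow_neg_one, ← div_eq_mul_inv]
  have hswap : AEMeasurable (Function.uncurry fun (x : G) (z : G) => ((‖f (x * z)‖₊ : ℝ≥0∞)) ^ qR)
      (rho.prod (rho.restrict (ball (1:G) r))) :=
    (((hf_meas.comp (measurable_fst.mul measurable_snd)).enorm).pow_const qR).aemeasurable
  calc ∫⁻ x, (ballAvg rho f x r) ^ qR ∂rho
      ≤ ∫⁻ x, (∫⁻ z in ball (1:G) r, ((‖f (x * z)‖₊ : ℝ≥0∞)) ^ qR ∂rho) / rho (ball (1:G) r) ∂rho :=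
        lintegral_mono hpt
    _ = (∫⁻ x, ∫⁻ z in ball (1:G) r, ((‖f (x * z)‖₊ : ℝ≥0∞)) ^ qR ∂rho ∂rho) / rho (ball (1:G) r) := by
        simp_rw [div_eq_mul_inv]
        exact lintegral_mul_const' _ _ (by simp [hrhoB0])
    _ = (∫⁻ z in ball (1:G) r, ∫⁻ x, ((‖f (x * z)‖₊ : ℝ≥0∞)) ^ qR ∂rho ∂rho) / rho (ball (1:G) r) := by
        rw [lintegral_lintegral_swap hswap]
    _ = (∫⁻ z in ball (1:G) r, (∫⁻ x, ((‖f x‖₊ : ℝ≥0∞)) ^ qR ∂rho) ∂rho) / rho (ball (1:G) r) := by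
        congr 1
        exact lintegral_congr fun z => lintegral_mul_right_eq_self (fun y => ((‖f y‖₊ : ℝ≥0∞)) ^ qR) z
    _ = ((∫⁻ x, ((‖f x‖₊ : ℝ≥0∞)) ^ qR ∂rho) * rho (ball (1:G) r)) / rho (ball (1:G) r) := by
        rw [setLIntegral_const]
    _ = ∫⁻ x, ((‖f x‖₊ : ℝ≥0∞)) ^ qR ∂rho := by
        rw [mul_div_assoc, ENNReal.div_self hrhoB0 hrhoBt, mul_one]

theorem intFn_lq_bound_right_haar {G : Type*} [Group G] [MetricSpace G] [IsTopologicalGroup G]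
    [MeasurableSpace G] [BorelSpace G] [LocallyCompactSpace G] [ProperSpace G]
    [NoncompactSpace G]
    (hd : ∀ g x y : G, dist (g * x) (g * y) = dist x y)
    (rho : Measure G) [IsFiniteMeasureOnCompacts rho] [rho.IsOpenPosMeasure]
    [rho.IsMulRightInvariant]
    (Delta : G → ℝ≥0∞)
    (hDelta : ∀ (x : G) (s : Set G), MeasurableSet s →
      rho ((fun y => x * y) '' s) = Delta x⁻¹ * rho s)
    (w : ℝ → ℝ) (hw_meas : Measurable w) (hw_nonneg : ∀ r, 0 ≤ w r)
    (hw_fin : wNorm w < ∞)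
    (hw_ne : ∀ᵐ r ∂(volume.restrict (Set.Ioi (0 : ℝ))), w r ≠ 0)
    (f : G → ℝ) (hf_meas : Measurable f)
    (hf_loc : ∀ s : Set G, Bornology.IsBounded s →
      (∫⁻ y in s, (‖f y‖₊ : ℝ≥0∞) ∂rho) < ∞)
    (p q : ℝ≥0∞) (hp : 1 ≤ p) (hpq : p ≤ q) :
    lqNorm rho (intFnE rho w p f) q ≤
      (wNorm w) ^ (p⁻¹.toReal) * lqNorm rho (fun x => ((‖f x‖₊ : ℝ≥0∞))) q := by
  have havg_essSup : ∀ (x : G) (r : ℝ),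
      ballAvg rho f x r ≤ essSup (fun x => ((‖f x‖₊ : ℝ≥0∞))) rho := by
    intro x r
    refine ENNReal.div_le_of_le_mul ?_
    calc ∫⁻ y in ball x r, (‖f y‖₊ : ℝ≥0∞) ∂rho
        ≤ ∫⁻ _ in ball x r, essSup (fun x => ((‖f x‖₊ : ℝ≥0∞))) rho ∂rho :=
          lintegral_mono_ae (ae_restrict_of_ae (ENNReal.ae_le_essSup _))
      _ = essSup (fun x => ((‖f x‖₊ : ℝ≥0∞))) rho * rho (ball x r) := setLIntegral_const _ _
  by_cases hptop : p = ∞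
  · have hq : q = ∞ := top_le_iff.mp (hptop ▸ hpq)
    subst hq
    rw [hptop]
    simp only [lqNorm, if_pos rfl, intFnE, ENNReal.inv_top, ENNReal.toReal_zero,
      ENNReal.rpow_zero, one_mul]
    refine essSup_le_of_ae_le _ (Filter.Eventually.of_forall fun x => ?_)
    simp only [if_pos rfl, maximalFn]
    exact iSup₂_le fun r _ => havg_essSup x r
  · have hp1 : (1:ℝ) ≤ p.toReal := by
      rw [← ENNReal.toReal_one]
      exact ENNReal.toReal_mono hptop hp
    have hp0 : (0:ℝ) < p.toReal := lt_of_lt_of_le one_pos hp1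
    have hIF : intFnE rho w p f = intFn rho w p.toReal f := by
      funext x
      simp [intFnE, hptop]
    have hinv : p⁻¹.toReal = 1 / p.toReal := by
      rw [ENNReal.toReal_inv, one_div]
    rw [hIF, hinv]
    by_cases hqtop : q = ∞
    · subst hqtop
      simp only [lqNorm, if_pos rfl]
      refine essSup_le_of_ae_le _ (Filter.Eventually.of_forall fun x => ?_)
      calc intFn rho w p.toReal f x
          ≤ (∫⁻ r in Set.Ioi (0:ℝ), ENNReal.ofReal (w r)
              * (essSup (fun x => ((‖f x‖₊ : ℝ≥0∞))) rho) ^ p.toReal) ^ (1 / p.toReal) := by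
            refine ENNReal.rpow_le_rpow ?_ (by positivity)
            refine lintegral_mono fun r => ?_
            exact mul_le_mul_right (ENNReal.rpow_le_rpow (havg_essSup x r) hp0.le) _
        _ = (wNorm w * (essSup (fun x => ((‖f x‖₊ : ℝ≥0∞))) rho) ^ p.toReal) ^ (1 / p.toReal) := by
            rw [lintegral_mul_const'' _ hw_meas.ennreal_ofReal.aemeasurable]
            rfl
        _ = wNorm w ^ (1 / p.toReal) * essSup (fun x => ((‖f x‖₊ : ℝ≥0∞))) rho := by
            rw [ENNReal.mul_rpow_of_nonneg _ _ (by positivity), ← ENNReal.rpow_mul,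
              mul_one_div, div_self hp0.ne', ENNReal.rpow_one]
    · have hq1 : (1:ℝ) ≤ q.toReal := by
        rw [← ENNReal.toReal_one]
        exact ENNReal.toReal_mono hqtop (le_trans hp hpq)
      have hq0 : (0:ℝ) < q.toReal := lt_of_lt_of_le one_pos hq1
      have hpq' : p.toReal ≤ q.toReal := ENNReal.toReal_mono hqtop hpq
      set s : ℝ := q.toReal / p.toReal with hs_def
      have hs1 : 1 ≤ s := (one_le_div hp0).2 hpq'
      have hs0 : (0:ℝ) < s := lt_of_lt_of_le one_pos hs1
      simp only [lqNorm, if_neg hqtop]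
      have hA : Measurable (fun xr : G × ℝ => ballAvg rho f xr.1 xr.2) :=
        ballAvg_measurable rho f hf_meas
      have hAx : ∀ x : G, Measurable fun r : ℝ => ballAvg rho f x r := by
        intro x
        have h := hA
        set g : G → ℝ → ℝ≥0∞ := ballAvg rho f with hg
        clear_value g
        exact h.comp (measurable_const.prodMk measurable_id)
      have hAr : ∀ r : ℝ, Measurable fun x : G => ballAvg rho f x r := by
        intro r
        have h := hA
        set g : G → ℝ → ℝ≥0∞ := ballAvg rho f with hg
        clear_value g
        exact h.comp (measurable_id.prodMk measurable_const)
      set ν : Measure ℝ := (volume.restrict (Set.Ioi (0:ℝ))).withDensity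
        (fun r => ENNReal.ofReal (w r)) with hν
      have hν_univ : ν Set.univ = wNorm w := by
        rw [hν, withDensity_apply _ MeasurableSet.univ, Measure.restrict_univ]
        rfl
      have hw_int : ∀ (g : ℝ → ℝ≥0∞), Measurable g →
          ∫⁻ r, g r ∂ν = ∫⁻ r in Set.Ioi (0:ℝ), ENNReal.ofReal (w r) * g r := by
        intro g hg
        rw [hν, lintegral_withDensity_eq_lintegral_mul _ hw_meas.ennreal_ofReal hg]
        rfl
      have hjen : ∀ x : G, (intFn rho w p.toReal f x) ^ q.toReal
          ≤ (∫⁻ r in Set.Ioi (0:ℝ), ENNReal.ofReal (w r) * (ballAvg rho f x r) ^ q.toReal)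
            * (wNorm w) ^ (s - 1) := by
        intro x
        have h0 : (intFn rho w p.toReal f x) ^ q.toReal
            = (∫⁻ r in Set.Ioi (0:ℝ), ENNReal.ofReal (w r) * (ballAvg rho f x r) ^ p.toReal) ^ s := by
          simp only [intFn]
          rw [← ENNReal.rpow_mul, one_div_mul_eq_div]
        rw [h0]
        have hJ := jensen_rpow_aux ν (fun r => (ballAvg rho f x r) ^ p.toReal)
          ((hAx x).pow_const p.toReal).aemeasurable hs1
        rw [hν_univ, hw_int _ ((hAx x).pow_const p.toReal)] at hJ
        have h2 : ∫⁻ r, ((ballAvg rho f x r) ^ p.toReal) ^ s ∂ν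
            = ∫⁻ r in Set.Ioi (0:ℝ), ENNReal.ofReal (w r) * (ballAvg rho f x r) ^ q.toReal := by
          rw [hw_int _ (((hAx x).pow_const p.toReal).pow_const s)]
          refine lintegral_congr fun r => ?_
          rw [← ENNReal.rpow_mul]
          congr 2
          field_simp [hs_def]
          rw [hs_def, mul_comm, div_mul_cancel₀ _ hp0.ne']
        rw [h2] at hJ
        exact hJ
      have hunc : AEMeasurable (Function.uncurry fun (x : G) (r : ℝ) =>
          ENNReal.ofReal (w r) * (ballAvg rho f x r) ^ q.toReal)
          (rho.prod (volume.restrict (Set.Ioi (0:ℝ)))) :=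
        ((hw_meas.ennreal_ofReal.comp measurable_snd).mul (hA.pow_const q.toReal)).aemeasurable
      have hWt : (wNorm w) ^ (s - 1) ≠ ∞ :=
        ENNReal.rpow_ne_top_of_nonneg (by linarith) hw_fin.ne
      have main : ∫⁻ x, (intFn rho w p.toReal f x) ^ q.toReal ∂rho
          ≤ (∫⁻ x, ((‖f x‖₊ : ℝ≥0∞)) ^ q.toReal ∂rho) * (wNorm w) ^ s := by
        calc ∫⁻ x, (intFn rho w p.toReal f x) ^ q.toReal ∂rho
            ≤ ∫⁻ x, (∫⁻ r in Set.Ioi (0:ℝ), ENNReal.ofReal (w r)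
                * (ballAvg rho f x r) ^ q.toReal) * (wNorm w) ^ (s - 1) ∂rho :=
              lintegral_mono hjen
          _ = (∫⁻ x, ∫⁻ r in Set.Ioi (0:ℝ), ENNReal.ofReal (w r)
                * (ballAvg rho f x r) ^ q.toReal ∂volume ∂rho) * (wNorm w) ^ (s - 1) :=
              lintegral_mul_const' _ _ hWt
          _ = (∫⁻ r in Set.Ioi (0:ℝ), ∫⁻ x, ENNReal.ofReal (w r)
                * (ballAvg rho f x r) ^ q.toReal ∂rho ∂volume) * (wNorm w) ^ (s - 1) := by
              rw [lintegral_lintegral_swap hunc]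
          _ ≤ (∫⁻ r in Set.Ioi (0:ℝ), ENNReal.ofReal (w r)
                * (∫⁻ x, ((‖f x‖₊ : ℝ≥0∞)) ^ q.toReal ∂rho) ∂volume) * (wNorm w) ^ (s - 1) := by
              refine mul_le_mul_left (lintegral_mono fun r => ?_) _
              rw [lintegral_const_mul'' _ ((hAr r).pow_const q.toReal).aemeasurable]
              exact mul_le_mul_right (avg_pow_lq hd rho Delta hDelta f hf_meas hq1 r) _
          _ = ((wNorm w) * (∫⁻ x, ((‖f x‖₊ : ℝ≥0∞)) ^ q.toReal ∂rho)) * (wNorm w) ^ (s - 1) := by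
              rw [lintegral_mul_const'' _ hw_meas.ennreal_ofReal.aemeasurable]
              rfl
          _ = (∫⁻ x, ((‖f x‖₊ : ℝ≥0∞)) ^ q.toReal ∂rho) * (wNorm w) ^ s := by
              rw [mul_comm (wNorm w), mul_assoc]
              congr 1
              calc wNorm w * wNorm w ^ (s - 1) = wNorm w ^ (1:ℝ) * wNorm w ^ (s - 1) := by
                    rw [ENNReal.rpow_one]
                _ = wNorm w ^ (1 + (s - 1)) :=
                    (ENNReal.rpow_add_of_nonneg 1 (s-1) zero_le_one (by linarith)).symm
                _ = wNorm w ^ s := by norm_num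
      calc (∫⁻ x, (intFn rho w p.toReal f x) ^ q.toReal ∂rho) ^ (1 / q.toReal)
          ≤ ((∫⁻ x, ((‖f x‖₊ : ℝ≥0∞)) ^ q.toReal ∂rho) * (wNorm w) ^ s) ^ (1 / q.toReal) :=
            ENNReal.rpow_le_rpow main (by positivity)
        _ = wNorm w ^ (1 / p.toReal) * (∫⁻ x, ((‖f x‖₊ : ℝ≥0∞)) ^ q.toReal ∂rho) ^ (1 / q.toReal) := by
            rw [ENNReal.mul_rpow_of_nonneg _ _ (by positivity), ← ENNReal.rpow_mul (wNorm w),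
              mul_comm]
            congr 2
            field_simp [hs_def]
            rw [hs_def, div_mul_cancel₀ _ hp0.ne']
end

section
/- Let w : (0,∞) → [0,∞) be measurable with ∫_0^∞ w < ∞, let p ∈ [1,∞), and let f ∈ L^p(ℝ^n). Then ‖I_{p,w}f‖_{L^p(ℝ^n)} ≤ ‖w‖^{1/p} ‖f‖_{L^p(ℝ^n)}; in particular the Hardy–Littlewood integral-function operator I_{1,w} is bounded on L^1(ℝ^n), in contrast to the classical maximal operator M. -/
open MeasureTheory Metric Filter Set ENNReal

lemma jensen_ball {X : Type*} [MeasurableSpace X] (mu : Measure X)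
    (h : X → ℝ≥0∞) (hh : Measurable h) (s : Set X) (hs : mu s ≠ 0) (hs' : mu s ≠ ∞)
    (p : ℝ) (hp : 1 ≤ p) :
    ((∫⁻ y in s, h y ∂mu) / mu s) ^ p ≤ (∫⁻ y in s, h y ^ p ∂mu) / mu s := by
  rcases eq_or_lt_of_le hp with hp1 | hp
  · simp [← hp1]
  set q := p / (p - 1) with hqdef
  have hpq : p.HolderConjugate q := Real.HolderConjugate.conjExponent hp
  have hold := ENNReal.lintegral_mul_le_Lp_mul_Lq (mu.restrict s) hpq
    hh.aemeasurable aemeasurable_const (g := fun _ => 1)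
  simp only [mul_one, Pi.mul_apply, ENNReal.one_rpow, lintegral_const,
    Measure.restrict_apply MeasurableSet.univ, univ_inter, one_mul] at hold
  have hp0 : (0:ℝ) < p := lt_trans one_pos hp
  have hq : p / q = p - 1 := by rw [hqdef, div_div_eq_mul_div, mul_div_cancel_left₀ _ hp0.ne']
  have hVp : mu s ^ p = mu s ^ (p-1) * mu s := by
    nth_rewrite 1 [show p = (p-1)+1 by ring]
    rw [ENNReal.rpow_add _ _ hs hs', ENNReal.rpow_one]
  calc ((∫⁻ y in s, h y ∂mu) / mu s) ^ p
      = (∫⁻ y in s, h y ∂mu) ^ p / (mu s) ^ p := ENNReal.div_rpow_of_nonneg _ _ hp0.le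
    _ ≤ (((∫⁻ y in s, h y ^ p ∂mu) ^ (1/p) * (mu s) ^ (1/q)) ^ p) / (mu s) ^ p := by
        gcongr
    _ = (∫⁻ y in s, h y ^ p ∂mu) * (mu s) ^ (p-1) / (mu s) ^ p := by
        rw [ENNReal.mul_rpow_of_nonneg _ _ hp0.le, ← ENNReal.rpow_mul,
          ← ENNReal.rpow_mul, one_div_mul_cancel hp0.ne', ENNReal.rpow_one,
          one_div, inv_mul_eq_div, hq]
    _ = (∫⁻ y in s, h y ^ p ∂mu) / mu s := by
        rw [hVp, mul_comm (∫⁻ y in s, h y ^ p ∂mu) (mu s ^ (p-1)),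
          mul_comm (mu s ^ (p-1)) (mu s), mul_comm (mu s) (mu s ^ (p-1)),
          ENNReal.mul_div_mul_left _ _
            (by simp [ENNReal.rpow_eq_zero_iff, hs, hs'])
            (ENNReal.rpow_ne_top_of_nonneg (by linarith) hs')]

lemma indicator_ball_eq {X : Type*} [PseudoMetricSpace X] (h : X → ℝ≥0∞)
    (x y : X) (r : ℝ) :
    (ball x r).indicator h y = if dist y x < r then h y else 0 := by
  by_cases hy : dist y x < r
  · rw [if_pos hy, Set.indicator_of_mem (mem_ball.2 hy)]
  · rw [if_neg hy, Set.indicator_of_notMem (fun hc => hy (mem_ball.1 hc))]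

variable {n : ℕ}

local notation "X" => EuclideanSpace ℝ (Fin n)

lemma ball_vol_eq (x y : X) (r : ℝ) : volume (ball x r) = volume (ball y r) := by
  simp [Measure.addHaar_ball_center]

/-- Joint measurability of the set-lintegral over balls. -/
lemma meas_ball_lintegral (h : X → ℝ≥0∞) (hh : Measurable h) :
    Measurable (fun q : X × ℝ => ∫⁻ y in ball q.1 q.2, h y) := by
  have hF : Measurable (fun z : (X × ℝ) × X =>
      if dist z.2 z.1.1 < z.1.2 then h z.2 else 0) := by
    refine Measurable.ite ?_ (hh.comp measurable_snd) measurable_const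
    exact measurableSet_lt
      (continuous_snd.dist (continuous_fst.comp continuous_fst)).measurable
      (continuous_snd.comp continuous_fst).measurable
  have heq : (fun q : X × ℝ => ∫⁻ y in ball q.1 q.2, h y)
      = fun q : X × ℝ => ∫⁻ y, (if dist y q.1 < q.2 then h y else 0) := by
    funext q
    rw [← lintegral_indicator measurableSet_ball]
    exact lintegral_congr fun y => indicator_ball_eq h q.1 y q.2
  rw [heq]
  exact hF.lintegral_prod_right' (ν := volume)

lemma avg_integral (h : X → ℝ≥0∞) (hh : Measurable h) {r : ℝ} (hr : 0 < r) :
    ∫⁻ x, (∫⁻ y in ball x r, h y) / volume (ball x r) = ∫⁻ y, h y := by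
  set V := volume (ball (0 : X) r) with hVdef
  have hV0 : V ≠ 0 := (measure_ball_pos _ _ hr).ne'
  have hVt : V ≠ ∞ := measure_ball_lt_top.ne
  have hball : ∀ x : X, volume (ball x r) = V := fun x => ball_vol_eq x 0 r
  have hF : Measurable (fun z : X × X => if dist z.2 z.1 < r then h z.2 else 0) := by
    refine Measurable.ite ?_ (hh.comp measurable_snd) measurable_const
    exact measurableSet_lt (continuous_snd.dist continuous_fst).measurable measurable_const
  have key : ∀ x : X, ∫⁻ y in ball x r, h y
      = ∫⁻ y, (if dist y x < r then h y else 0) := by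
    intro x
    rw [← lintegral_indicator measurableSet_ball]
    exact lintegral_congr fun y => indicator_ball_eq h x y r
  calc ∫⁻ x, (∫⁻ y in ball x r, h y) / volume (ball x r)
      = ∫⁻ x, (∫⁻ y in ball x r, h y) * V⁻¹ := by
        simp_rw [hball, div_eq_mul_inv]
    _ = (∫⁻ x, ∫⁻ y in ball x r, h y) * V⁻¹ := by
        refine lintegral_mul_const'' _ ?_
        have := meas_ball_lintegral (n := n) h hh
        exact (this.comp (measurable_id.prodMk measurable_const)).aemeasurable
    _ = (∫⁻ y, h y * V) * V⁻¹ := by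
        congr 1
        simp_rw [key]
        rw [lintegral_lintegral_swap (f := fun x y : X => if dist y x < r then h y else 0)
          hF.aemeasurable]
        refine lintegral_congr fun y => ?_
        have : ∀ x : X, (if dist y x < r then h y else 0)
            = Set.indicator (ball y r) (fun _ => h y) x := by
          intro x
          rw [indicator_ball_eq (fun _ => h y) y x r, dist_comm]
        simp_rw [this]
        rw [lintegral_indicator measurableSet_ball, setLIntegral_const, hball y]
    _ = ∫⁻ y, h y := by
        rw [lintegral_mul_const'' _ hh.aemeasurable, mul_assoc,
          ENNReal.mul_inv_cancel hV0 hVt, mul_one]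


variable {n : ℕ}

lemma avg_rpow_le (g : EuclideanSpace ℝ (Fin n) → ℝ) (hg : Measurable g)
    (p : ℝ) (hp : 1 ≤ p) {r : ℝ} (hr : 0 < r) :
    ∫⁻ x, (ballAvg volume g x r) ^ p ≤ ∫⁻ y, ((‖g y‖₊ : ℝ≥0∞)) ^ p := by
  have hgm : Measurable fun y : EuclideanSpace ℝ (Fin n) => ((‖g y‖₊ : ℝ≥0∞)) :=
    hg.nnnorm.coe_nnreal_ennreal
  calc ∫⁻ x, (ballAvg volume g x r) ^ p
      ≤ ∫⁻ x, (∫⁻ y in ball x r, ((‖g y‖₊ : ℝ≥0∞)) ^ p) / volume (ball x r) := by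
        refine lintegral_mono fun x => ?_
        exact jensen_ball volume _ hgm _ (measure_ball_pos _ _ hr).ne'
          measure_ball_lt_top.ne p hp
    _ = ∫⁻ y, ((‖g y‖₊ : ℝ≥0∞)) ^ p :=
        avg_integral _ (hgm.pow measurable_const) hr



theorem intFn_lp_bound_euclidean (n : ℕ)
    (w : ℝ → ℝ) (hw_meas : Measurable w) (hw_nonneg : ∀ r, 0 ≤ w r)
    (hw_fin : wNorm w < ∞)
    (hw_ne : ∀ᵐ r ∂(volume.restrict (Set.Ioi (0 : ℝ))), w r ≠ 0)
    (p : ℝ) (hp : 1 ≤ p)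
    (f : EuclideanSpace ℝ (Fin n) → ℝ) (hf : MemLp f (ENNReal.ofReal p) volume) :
    (∫⁻ x, (intFn volume w p f x) ^ p) ^ (1 / p) ≤
      (wNorm w) ^ (1 / p) * (∫⁻ x, ((‖f x‖₊ : ℝ≥0∞)) ^ p) ^ (1 / p) := by
  have hp0 : (0:ℝ) < p := lt_of_lt_of_le one_pos hp
  -- replace f by a measurable representative g
  set g := hf.1.mk f with hgdef
  have hfg : f =ᵐ[volume] g := hf.1.ae_eq_mk
  have hg : Measurable g := hf.1.stronglyMeasurable_mk.measurable
  have hball : ∀ x r, ballAvg volume f x r = ballAvg volume g x r := by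
    intro x r
    unfold ballAvg
    congr 1
    exact lintegral_congr_ae ((ae_restrict_of_ae hfg).mono fun y hy => by simp only [hy])
  have hIfg : ∀ x, intFn volume w p f x = intFn volume w p g x := by
    intro x; unfold intFn; simp_rw [hball]
  have hRHS : ∫⁻ x, ((‖f x‖₊ : ℝ≥0∞)) ^ p = ∫⁻ x, ((‖g x‖₊ : ℝ≥0∞)) ^ p :=
    lintegral_congr_ae (hfg.mono fun y hy => by simp only [hy])
  simp_rw [hIfg, hRHS]
  -- unfold the p-th power of intFn
  have hpow : ∀ x, (intFn volume w p g x) ^ p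
      = ∫⁻ r in Set.Ioi (0:ℝ), ENNReal.ofReal (w r) * (ballAvg volume g x r) ^ p := by
    intro x
    rw [intFn, ← ENNReal.rpow_mul, one_div_mul_cancel hp0.ne', ENNReal.rpow_one]
  simp_rw [hpow]
  -- joint measurability of the integrand
  have hgm : Measurable fun y : EuclideanSpace ℝ (Fin n) => ((‖g y‖₊ : ℝ≥0∞)) :=
    hg.nnnorm.coe_nnreal_ennreal
  have hN : Measurable (fun q : EuclideanSpace ℝ (Fin n) × ℝ =>
      ∫⁻ y in ball q.1 q.2, ((‖g y‖₊ : ℝ≥0∞))) := meas_ball_lintegral _ hgm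
  have hD : Measurable (fun q : EuclideanSpace ℝ (Fin n) × ℝ =>
      ∫⁻ y in ball q.1 q.2, (1:ℝ≥0∞)) := meas_ball_lintegral _ measurable_const
  have hDvol : ∀ q : EuclideanSpace ℝ (Fin n) × ℝ,
      (∫⁻ y in ball q.1 q.2, (1:ℝ≥0∞)) = volume (ball q.1 q.2) := fun q =>
    setLIntegral_one _
  have hG : Measurable (fun q : EuclideanSpace ℝ (Fin n) × ℝ =>
      ENNReal.ofReal (w q.2) * (ballAvg volume g q.1 q.2) ^ p) := by
    have : (fun q : EuclideanSpace ℝ (Fin n) × ℝ =>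
        ENNReal.ofReal (w q.2) * (ballAvg volume g q.1 q.2) ^ p)
        = fun q => ENNReal.ofReal (w q.2) *
          ((∫⁻ y in ball q.1 q.2, ((‖g y‖₊ : ℝ≥0∞))) /
            (∫⁻ y in ball q.1 q.2, (1:ℝ≥0∞))) ^ p := by
      funext q; rw [hDvol]; rfl
    rw [this]
    exact ((hw_meas.comp measurable_snd).ennreal_ofReal).mul
      ((hN.div hD).pow measurable_const)
  -- Tonelli
  rw [lintegral_lintegral_swap
    (f := fun x r => ENNReal.ofReal (w r) * (ballAvg volume g x r) ^ p) hG.aemeasurable]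
  -- bound the inner integral for each r > 0
  have hbound : ∫⁻ r in Set.Ioi (0:ℝ),
        ∫⁻ x, ENNReal.ofReal (w r) * (ballAvg volume g x r) ^ p
      ≤ ∫⁻ r in Set.Ioi (0:ℝ),
        ENNReal.ofReal (w r) * ∫⁻ x, ((‖g x‖₊ : ℝ≥0∞)) ^ p := by
    refine lintegral_mono_ae ((ae_restrict_iff' measurableSet_Ioi).2
      (ae_of_all _ fun r hr => ?_))
    rw [lintegral_const_mul' _ _ ENNReal.ofReal_ne_top]
    exact mul_le_mul_right (avg_rpow_le g hg p hp hr) _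
  refine le_trans (ENNReal.rpow_le_rpow hbound (by positivity)) ?_
  rw [lintegral_mul_const'' _ (hw_meas.ennreal_ofReal.aemeasurable.restrict)]
  rw [ENNReal.mul_rpow_of_nonneg _ _ (by positivity : (0:ℝ) ≤ 1/p)]
  exact le_rfl
end
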